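/- arXiv:2201.12400 — 10 statements merged into one kernel-verified Lean document; each statement's English description precedes it below -/
import Mathlib

section
/- Let E be a finite directed graph with adjacency matrix A_E ∈ ℤ^{reg(E)×E⁰} (where (A_E)_{v,w} is the number of edges from v to w, and reg(E) is the set of vertices emitting at least one and finitely many edges) and I ∈ ℤ^{E⁰×reg(E)} the matrix with I_{v,w} = δ_{v,w}. If E has at least one vertex, then the cokernel of the ℤ[σ,σ⁻¹]-linear map I − σ·A_E^t : ℤ[σ,σ⁻¹]^{reg(E)} → ℤ[σ,σ⁻¹]^{E⁰} is nonzero. -/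
/-!
If the map is onto, the rank condition for `ℤ[σ,σ⁻¹]` forces `reg(E) = E⁰`, so `I - σ A_Eᵗ` is an
invertible square matrix. Specialising `σ` to nonzero elements of an algebraically closed field
shows that `det (I - z A_E)` never vanishes, so the reversed characteristic polynomial of `A_E` is
`1` and `A_E` is nilpotent. But when every vertex emits an edge, `A_E 𝟙 ≥ 𝟙` entrywise, so no power
of `A_E` vanishes.
-/

open Matrix Polynomial LaurentPolynomial

namespace Matrix

variable {n : Type*} [Fintype n] [DecidableEq n]

theorem eval_charpolyRev_eq_det {R : Type*} [CommRing R] (M : Matrix n n R) (z : R) :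
    M.charpolyRev.eval z = (1 - z • M).det := by
  rw [charpolyRev, ← coe_evalRingHom, RingHom.map_det]
  congr 1
  ext i j
  simp [one_apply, apply_ite]
  ring

theorem isNilpotent_of_charpolyRev_eq_one {R : Type*} [CommRing R] {M : Matrix n n R}
    (h : M.charpolyRev = 1) : IsNilpotent M := by
  nontriviality R
  have hX : M.charpoly = X ^ Fintype.card n := by
    rw [← reflect_reflect (N := Fintype.card n) (p := M.charpoly), ← charpoly_natDegree_eq_dim M,
      ← reverse, reverse_charpoly, h, charpoly_natDegree_eq_dim, reflect_one]
  refine ⟨Fintype.card n, ?_⟩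
  simpa [hX] using M.aeval_self_charpoly

theorem isNilpotent_of_det_one_sub_smul_ne_zero {K : Type*} [Field K] [IsAlgClosed K]
    {M : Matrix n n K} (h : ∀ z : K, (1 - z • M).det ≠ 0) : IsNilpotent M := by
  apply isNilpotent_of_charpolyRev_eq_one
  have hdeg : M.charpolyRev.degree ≤ 0 := by
    by_contra! hpos
    obtain ⟨z, hz⟩ := IsAlgClosed.exists_root _ hpos.ne'
    exact h z (by rwa [← eval_charpolyRev_eq_det])
  rw [eq_C_of_degree_le_zero hdeg, coeff_zero_eq_eval_zero, eval_charpolyRev, C_1]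

theorem isNilpotent_of_isUnit_one_sub_T_smul {R : Type*} [CommRing R] [IsDomain R]
    {M : Matrix n n R} (h : IsUnit (1 - (T 1 : R[T;T⁻¹]) • M.map LaurentPolynomial.C)) :
    IsNilpotent M := by
  let F := FractionRing R
  let ι : R →+* AlgebraicClosure F := (algebraMap F _).comp (algebraMap R F)
  have hι : Function.Injective ι :=
    (algebraMap F _).injective.comp (IsFractionRing.injective R F)
  rw [← IsNilpotent.map_iff (f := ι.mapMatrix) (map_injective hι)]
  refine isNilpotent_of_det_one_sub_smul_ne_zero fun z => ?_
  rcases eq_or_ne z 0 with rfl | hz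
  · simp
  have hmap : (LaurentPolynomial.eval₂ ι (Units.mk0 z hz)).mapMatrix
      (1 - (T 1 : R[T;T⁻¹]) • M.map LaurentPolynomial.C) = 1 - z • ι.mapMatrix M := by
    ext i j
    simp [one_apply]
    ring
  rw [← isUnit_iff_ne_zero, ← isUnit_iff_isUnit_det, ← hmap]
  exact h.map _

theorem not_isNilpotent_of_nonneg_of_forall_exists_one_le {R : Type*} [Semiring R]
    [PartialOrder R] [IsOrderedRing R] [Nontrivial R] [Nonempty n] {M : Matrix n n R}
    (hM : ∀ i j, 0 ≤ M i j) (hrow : ∀ i, ∃ j, 1 ≤ M i j) : ¬IsNilpotent M := by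
  have hone : ∀ i, 1 ≤ (M *ᵥ 1) i := fun i => by
    obtain ⟨j, hj⟩ := hrow i
    refine hj.trans ?_
    simpa [mulVec, dotProduct] using Finset.single_le_sum (fun j _ => hM i j) (Finset.mem_univ j)
  have hpow : ∀ k : ℕ, ∀ i, 1 ≤ (M ^ k *ᵥ 1) i := by
    intro k
    induction k with
    | zero => simp
    | succ k ih =>
      intro i
      rw [pow_succ', ← mulVec_mulVec]
      refine (hone i).trans (Finset.sum_le_sum fun j _ => ?_)
      exact mul_le_mul_of_nonneg_left (ih j) (hM i j)
  rintro ⟨k, hk⟩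
  obtain ⟨i⟩ := ‹Nonempty n›
  exact zero_lt_one.not_ge (by simpa [hk] using hpow k i)

theorem mulVec_surjective_of_submatrix {m l R : Type*} [Fintype l] [Semiring R] {M : Matrix m n R}
    (f : l → n) (hM : Function.Surjective (M.submatrix id f).mulVec) :
    Function.Surjective M.mulVec := by
  have hsub : M * (1 : Matrix n n R).submatrix id f = M.submatrix id f := by
    simpa using mul_submatrix_one (Equiv.refl n) f M
  rw [← hsub] at hM
  refine .of_comp (g := ((1 : Matrix n n R).submatrix id f).mulVec) ?_
  simpa [Function.comp_def, mulVec_mulVec] using hM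

end Matrix

section Graph

variable {V Ed : Type} [Fintype Ed] [DecidableEq V]

def adjacencyMatrix (s r : Ed → V) : Matrix V V ℤ :=
  Matrix.of fun v w => Fintype.card {e : Ed // s e = v ∧ r e = w}

theorem adjacencyMatrix_nonneg (s r : Ed → V) (v w : V) : 0 ≤ adjacencyMatrix s r v w :=
  Int.natCast_nonneg _

theorem one_le_adjacencyMatrix {s r : Ed → V} (e : Ed) : 1 ≤ adjacencyMatrix s r (s e) (r e) :=
  Nat.one_le_cast.mpr <| Fintype.card_pos_iff.mpr
    ⟨(⟨e, rfl, rfl⟩ : {e' : Ed // s e' = s e ∧ r e' = r e})⟩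

end Graph

/-- For a finite directed graph `E` (with vertex type `V`, edge type `Ed`,
source `s` and range `r`) with at least one vertex, the cokernel of the
`ℤ[σ,σ⁻¹]`-linear map `I - σ·A_E^t : ℤ[σ,σ⁻¹]^{reg(E)} → ℤ[σ,σ⁻¹]^{E⁰}` is nonzero,
i.e. the map is not surjective.  Here `reg(E)` is the set of vertices emitting at
least one (and, `E` being finite, automatically finitely many) edges, and the matrix
has `(v,w)`-entry `δ_{v,w} - σ·(A_E)_{w,v}` where `(A_E)_{w,v}` counts edges from
`w` to `v`. -/
theorem stmt_0 {V Ed : Type} [Fintype V] [Fintype Ed] [DecidableEq V]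
    (s r : Ed → V) (hV : Nonempty V) :
    ¬ Function.Surjective
      (Matrix.mulVec
        (Matrix.of (fun (v : V) (w : {v : V // ∃ e, s e = v}) =>
          (if v = (w : V) then 1 else 0)
            - LaurentPolynomial.T 1 *
              (Fintype.card {e : Ed // s e = (w : V) ∧ r e = v} : LaurentPolynomial ℤ)))) := by
  intro hsurj
  set A := adjacencyMatrix s r
  have hreg : ∀ v, ∃ e, s e = v := by
    by_contra! ⟨v, hv⟩
    exact (Fintype.card_subtype_lt (p := fun v => ∃ e, s e = v) (by simpa using hv)).not_ge
      (card_le_of_surjective _ (mulVecLin _) hsurj)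
  have hsq : Function.Surjective (1 - (T 1 : ℤ[T;T⁻¹]) • Aᵀ.map LaurentPolynomial.C).mulVec := by
    refine mulVec_surjective_of_submatrix (Subtype.val : {v : V // ∃ e, s e = v} → V) ?_
    refine (congrArg (fun M : Matrix V {v // ∃ e, s e = v} ℤ[T;T⁻¹] => Function.Surjective M.mulVec)
      ?_).mp hsurj
    ext v w
    simp [A, adjacencyMatrix, one_apply]
  have hnil : IsNilpotent A := isNilpotent_transpose_iff.mp
    (isNilpotent_of_isUnit_one_sub_T_smul (mulVec_surjective_iff_isUnit.mp hsq))
  refine not_isNilpotent_of_nonneg_of_forall_exists_one_le (adjacencyMatrix_nonneg s r)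
    (fun v => ?_) hnil
  obtain ⟨e, rfl⟩ := hreg v
  exact ⟨r e, one_le_adjacencyMatrix e⟩
end

section
/- Let E be a row-finite directed graph. Then the sequence of abelian groups 0 → ℤ[σ,σ⁻¹]^{(reg(E))} → ℤ[σ,σ⁻¹]^{(E⁰)} → BF_gr(E) → 0, where the first map is given by the matrix I − σA_E^t and the second is the canonical projection onto the cokernel, is pure exact: it is exact and remains exact after tensoring over ℤ with any abelian group. -/
/-! Tensoring with an abelian group `M` identifies `ℤ[σ,σ⁻¹]^{(X)} ⊗ M` with `ℤ →₀ (X →₀ M)`, Laurent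
polynomials with coefficients in `M^{(X)}`, and turns `I - σA_E^t` into
`(y_n)_n ↦ (ι y_n - A_E^t y_{n-1})_n`, where `ι : M^{(reg E)} → M^{(E⁰)}` is extension by zero.
Since `ι` is injective, the lowest-degree coefficient of a nonzero `y` survives in its image, so the
map stays injective for every `M`; the case `M = ℤ` gives injectivity of `I - σA_E^t` itself. -/

/-- The `w`-th column of the matrix `I - σ·A_E^t`, as an element of the direct sum
`ℤ[σ,σ⁻¹]^{(E⁰)}`: it is `χ_w - σ·∑_{e : s(e)=w} χ_{r(e)}`. -/
noncomputable def bfCol {V Ed : Type} (s r : Ed → V) (w : V) :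
    V →₀ LaurentPolynomial ℤ :=
  Finsupp.single w 1 -
    (LaurentPolynomial.T 1 : LaurentPolynomial ℤ) •
      ∑ᶠ e : {e : Ed // s e = w}, Finsupp.single (r e.1) (1 : LaurentPolynomial ℤ)

/-- The map `I - σ·A_E^t : ℤ[σ,σ⁻¹]^{(reg(E))} → ℤ[σ,σ⁻¹]^{(E⁰)}` on direct sums. -/
noncomputable def bfMap {V Ed : Type} (s r : Ed → V) :
    ({v : V // ∃ e, s e = v} →₀ LaurentPolynomial ℤ) →ₗ[LaurentPolynomial ℤ]
      (V →₀ LaurentPolynomial ℤ) :=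
  Finsupp.linearCombination (LaurentPolynomial ℤ) (fun w : {v : V // ∃ e, s e = v} => bfCol s r w.1)

open TensorProduct

theorem Finsupp.injective_of_apply_eq_sub_apply_pred {P Q : Type*} [AddCommGroup P]
    [AddCommGroup Q] (g : (ℤ →₀ P) →+ (ℤ →₀ Q)) (J A : P →+ Q) (hJ : Function.Injective J)
    (hg : ∀ y n, g y n = J (y n) - A (y (n - 1))) : Function.Injective g := by
  refine (injective_iff_map_eq_zero g).2 fun y hy => ?_
  by_contra hy0
  have hne : y.support.Nonempty := Finsupp.support_nonempty_iff.2 hy0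
  set n₀ := y.support.min' hne
  have hbelow : y (n₀ - 1) = 0 :=
    Finsupp.notMem_support_iff.1 fun h => by linarith [y.support.min'_le _ h]
  have hlow : J (y n₀) = 0 := by
    simpa [hg, hbelow] using DFunLike.congr_fun hy n₀
  exact Finsupp.mem_support_iff.1 (y.support.min'_mem hne) (hJ (hlow.trans J.map_zero.symm))

-- Stated with `TensorProduct.instModule`, the structure `rTensor` uses; instance search would
-- pick `AddCommGroup.toIntModule` instead.
open scoped Classical in
noncomputable def laurentTensorEquiv (W M : Type*) [AddCommGroup M] :
    @LinearEquiv ℤ ℤ _ _ (RingHom.id ℤ) (RingHom.id ℤ) _ _ ((W →₀ LaurentPolynomial ℤ) ⊗[ℤ] M)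
      (ℤ →₀ W →₀ M) _ _ TensorProduct.instModule _ :=
  (TensorProduct.finsuppLeft ℤ ℤ (LaurentPolynomial ℤ) M W).trans <|
    (Finsupp.mapRange.linearEquiv
      (((AddMonoidAlgebra.coeffLinearEquiv ℤ).rTensor M).trans (finsuppScalarLeft ℤ M ℤ))).trans <|
    (Finsupp.curryLinearEquiv ℤ).symm.trans <|
    (Finsupp.domLCongr (Equiv.prodComm W ℤ)).trans (Finsupp.curryLinearEquiv ℤ)

theorem laurentTensorEquiv_symm_single (W M : Type*) [AddCommGroup M] (n : ℤ) (w : W) (m : M) :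
    (laurentTensorEquiv W M).symm (Finsupp.single n (Finsupp.single w m)) =
      Finsupp.single w (LaurentPolynomial.T n) ⊗ₜ[ℤ] m := by
  classical
  simp [laurentTensorEquiv, AddMonoidAlgebra.coeffLinearEquiv_symm_apply,
    Finsupp.mapRange.linearEquiv_symm, TensorProduct.finsuppScalarLeft_symm_apply_single,
    TensorProduct.finsuppLeft_symm_apply_single]

theorem laurentTensorEquiv_single_tmul (W M : Type*) [AddCommGroup M] (w : W) (n : ℤ) (m : M) :
    laurentTensorEquiv W M (Finsupp.single w (LaurentPolynomial.T n) ⊗ₜ[ℤ] m) =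
      Finsupp.single n (Finsupp.single w m) := by
  rw [← laurentTensorEquiv_symm_single, LinearEquiv.apply_symm_apply]

theorem bfMap_single {V Ed : Type} (s r : Ed → V) [∀ v, Fintype {e : Ed // s e = v}]
    (w : {v : V // ∃ e, s e = v}) (n : ℤ) :
    bfMap s r (Finsupp.single w (LaurentPolynomial.T n)) =
      Finsupp.single w.1 (LaurentPolynomial.T n) -
        ∑ e : {e : Ed // s e = w.1}, Finsupp.single (r e.1) (LaurentPolynomial.T (n + 1)) := by
  rw [bfMap, Finsupp.linearCombination_single, bfCol, finsum_eq_sum_of_fintype, smul_sub, smul_smul,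
    ← LaurentPolynomial.T_add, Finset.smul_sum]
  simp [Finsupp.smul_single]

noncomputable def adjTransposeMap {V Ed : Type} (s r : Ed → V) [∀ v, Fintype {e : Ed // s e = v}]
    (M : Type) [AddCommGroup M] : ({v : V // ∃ e, s e = v} →₀ M) →ₗ[ℤ] (V →₀ M) :=
  Finsupp.lsum ℤ fun w => ∑ e : {e : Ed // s e = w.1}, Finsupp.lsingle (r e.1)

theorem lapply_laurentTensorEquiv_rTensor_bfMap {V Ed : Type} (s r : Ed → V)
    [∀ v, Fintype {e : Ed // s e = v}] (M : Type) [AddCommGroup M] (n : ℤ) :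
    Finsupp.lapply n ∘ₗ (laurentTensorEquiv V M).toLinearMap ∘ₗ
        ((bfMap s r).restrictScalars ℤ).rTensor M ∘ₗ
        (laurentTensorEquiv {v : V // ∃ e, s e = v} M).symm.toLinearMap =
      Finsupp.lmapDomain M ℤ Subtype.val ∘ₗ Finsupp.lapply n -
        adjTransposeMap s r M ∘ₗ Finsupp.lapply (n - 1) := by
  refine Finsupp.lhom_ext' fun k => Finsupp.lhom_ext' fun w => LinearMap.ext fun m => ?_
  have hpred : (k + 1 = n) = (k = n - 1) := propext ⟨fun h => by omega, fun h => by omega⟩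
  simp only [LinearMap.comp_apply, LinearMap.sub_apply, Finsupp.lsingle_apply,
    LinearEquiv.coe_coe, laurentTensorEquiv_symm_single, LinearMap.rTensor_tmul,
    LinearMap.restrictScalars_apply, bfMap_single, sub_tmul, sum_tmul, map_sub, map_sum,
    laurentTensorEquiv_single_tmul, Finsupp.lapply_apply, Finsupp.single_apply, hpred,
    Finsupp.lmapDomain_apply]
  split_ifs <;> simp [adjTransposeMap]

theorem rTensor_bfMap_injective {V Ed : Type} (s r : Ed → V) [∀ v, Fintype {e : Ed // s e = v}]
    (M : Type) [AddCommGroup M] :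
    Function.Injective (((bfMap s r).restrictScalars ℤ).rTensor M) := by
  set ΘW := laurentTensorEquiv {v : V // ∃ e, s e = v} M
  set ΘV := laurentTensorEquiv V M
  set g := ΘV.toLinearMap ∘ₗ ((bfMap s r).restrictScalars ℤ).rTensor M ∘ₗ ΘW.symm.toLinearMap
  have hg : Function.Injective g :=
    Finsupp.injective_of_apply_eq_sub_apply_pred g.toAddMonoidHom
      (Finsupp.lmapDomain M ℤ Subtype.val).toAddMonoidHom (adjTransposeMap s r M).toAddMonoidHom
      (Finsupp.mapDomain_injective Subtype.val_injective)
      fun y n => LinearMap.congr_fun (lapply_laurentTensorEquiv_rTensor_bfMap s r M n) y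
  have hfactor : ((bfMap s r).restrictScalars ℤ).rTensor M = ΘV.symm ∘ g ∘ ΘW := by
    ext x; simp [g]
  rw [hfactor]
  exact ΘV.symm.injective.comp (hg.comp ΘW.injective)

theorem LinearMap.injective_of_rTensor_self_injective {R M N : Type*} [CommSemiring R]
    [AddCommMonoid M] [AddCommMonoid N] [Module R M] [Module R N] (f : M →ₗ[R] N)
    (hf : Function.Injective (f.rTensor R)) : Function.Injective f := by
  intro a b hab
  have h := hf (show f.rTensor R (a ⊗ₜ 1) = f.rTensor R (b ⊗ₜ 1) by simp [hab])
  simpa using congrArg (TensorProduct.rid R M) h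

/-- For a row-finite graph `E`, the sequence
`0 → ℤ[σ,σ⁻¹]^{(reg E)} → ℤ[σ,σ⁻¹]^{(E⁰)} → BF_gr(E) → 0`, with first map `I - σA_E^t`
and second map the projection onto the cokernel, is pure exact: it is exact (the first
map is injective, the projection is surjective, and the image of the first map is the
kernel of the projection), and it stays exact after tensoring over `ℤ` with any abelian
group (by right exactness of the tensor product it suffices that the first map stays
injective after applying `- ⊗_ℤ M` for every abelian group `M`). -/
theorem stmt_1 {V Ed : Type} (s r : Ed → V)
    (hrow : ∀ v : V, Finite {e : Ed // s e = v}) :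
    Function.Injective (bfMap s r) ∧
    Function.Surjective (Submodule.mkQ (LinearMap.range (bfMap s r))) ∧
    Function.Exact (bfMap s r) (Submodule.mkQ (LinearMap.range (bfMap s r))) ∧
    ∀ (M : Type) [AddCommGroup M],
      Function.Injective
        (LinearMap.rTensor (R := ℤ) M (LinearMap.restrictScalars ℤ (bfMap s r))) := by
  have : ∀ v, Fintype {e : Ed // s e = v} := fun v => @Fintype.ofFinite _ (hrow v)
  exact ⟨LinearMap.injective_of_rTensor_self_injective ((bfMap s r).restrictScalars ℤ)
      (rTensor_bfMap_injective s r ℤ),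
    Submodule.mkQ_surjective _, LinearMap.exact_map_mkQ_range _, rTensor_bfMap_injective s r⟩
end

section
/- Let E be a finite directed graph and let cl : ℤ^{E⁰} → BF_gr(E) be the composite of the canonical inclusion ℤ^{E⁰} → ℤ[σ,σ⁻¹]^{E⁰} with the projection onto BF_gr(E) = coker(I − σA_E^t). Then ker(cl) ∩ ℕ^{E⁰} = 0; in other words, no nonzero linear combination of vertices with nonnegative integer coefficients maps to zero in BF_gr(E). -/
/-!
Write `x = (I - σAᵗ) y` coefficientwise in `σ`. For a regular vertex `w` this reads
`y_w(n) = δ_{n,0} x_w + ∑_{w'} A(w', w) y_{w'}(n - 1)`, and for `n ≠ 0` it says that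
`Aᵗ y(n - 1)` is `y(n)` padded by zeros at the sinks. As `y` has finite support, upward induction
shows that `y` vanishes in negative degrees and has nonnegative coefficients. Downward induction
from the top degree then kills all degrees `n ≥ 0`: a nonnegative vector `y(n - 1)` with
`Aᵗ y(n - 1) = 0` is zero, since every regular vertex emits an edge. So `y = 0`, hence `x = 0`.
-/

open LaurentPolynomial

namespace LaurentPolynomial

variable {R : Type*} [Semiring R]

lemma coeff_T_mul (m : ℤ) (p : R[T;T⁻¹]) (n : ℤ) : (T m * p).coeff n = p.coeff (n - m) := by
  rw [T, AddMonoidAlgebra.coeff_single_mul_apply, one_mul, neg_add_eq_sub]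

lemma coeff_natCast_mul (c : ℕ) (p : R[T;T⁻¹]) (n : ℤ) :
    ((c : R[T;T⁻¹]) * p).coeff n = c * p.coeff n := by
  rw [← nsmul_eq_mul, AddMonoidAlgebra.coeff_smul_apply, nsmul_eq_mul]

lemma coeff_natCast (c : ℕ) (n : ℤ) : (c : R[T;T⁻¹]).coeff n = if n = 0 then (c : R) else 0 := by
  rw [AddMonoidAlgebra.coeff_natCast, Finsupp.single_apply]
  exact if_congr eq_comm rfl rfl

instance [CharZero R] : CharZero R[T;T⁻¹] where
  cast_injective a b h := by
    simpa only [coeff_natCast, if_true, Nat.cast_inj] using congrArg (·.coeff 0) h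

lemma exists_coeff_eq_zero_of_natAbs_lt {ι : Type*} [Fintype ι] (p : ι → R[T;T⁻¹]) :
    ∃ N : ℕ, ∀ i n, N < n.natAbs → (p i).coeff n = 0 := by
  classical
  obtain ⟨N, hN⟩ :=
    Finset.exists_le ((Finset.univ.biUnion fun i => (p i).coeff.support).image Int.natAbs)
  refine ⟨N, fun i n hn => ?_⟩
  by_contra h
  exact hn.not_ge <| hN _ <| Finset.mem_image_of_mem _ <|
    Finset.mem_biUnion.2 ⟨i, Finset.mem_univ _, Finsupp.mem_support_iff.2 h⟩

end LaurentPolynomial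

open Matrix

namespace BowenFranks

variable {V Ed : Type*} [Fintype Ed] [DecidableEq V]

def edgeCount (s r : Ed → V) (w v : V) : ℕ := Fintype.card {e : Ed // s e = w ∧ r e = v}

lemma edgeCount_pos (s r : Ed → V) (e : Ed) : 0 < edgeCount s r (s e) (r e) :=
  Fintype.card_pos_iff.2 ⟨⟨e, rfl, rfl⟩⟩

variable [Fintype V]

abbrev RegVertex (s : Ed → V) := {v : V // ∃ e, s e = v}

-- `I - σA_Eᵗ` with `σ = T 1`; its columns are indexed by the regular vertices.
noncomputable def bfMatrix (s r : Ed → V) : Matrix V (RegVertex s) ℤ[T;T⁻¹] :=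
  Matrix.of fun v w => (if v = (w : V) then 1 else 0) - T 1 * (edgeCount s r w v : ℤ[T;T⁻¹])

variable {s r : Ed → V}

lemma coeff_bfMatrix_mulVec (y : RegVertex s → ℤ[T;T⁻¹]) (v : V) (n : ℤ) :
    ((bfMatrix s r *ᵥ y) v).coeff n =
      (∑ w : RegVertex s, if v = w then (y w).coeff n else 0)
        - ∑ w : RegVertex s, (edgeCount s r w v : ℤ) * (y w).coeff (n - 1) := by
  simp only [Matrix.mulVec, dotProduct, bfMatrix, Matrix.of_apply, sub_mul, Finset.sum_sub_distrib,
    AddMonoidAlgebra.coeff_sub, AddMonoidAlgebra.coeff_sum, Finsupp.sub_apply, Finsupp.finsetSum_apply,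
    mul_assoc, coeff_T_mul, coeff_natCast_mul, ite_mul, one_mul, zero_mul,
    apply_ite (fun p : ℤ[T;T⁻¹] => p.coeff n)]
  rfl

variable {x : V → ℕ} {y : RegVertex s → ℤ[T;T⁻¹]}

lemma coeff_eq_of_bfMatrix_mulVec_eq (hy : bfMatrix s r *ᵥ y = fun v => (x v : ℤ[T;T⁻¹]))
    (w : RegVertex s) (n : ℤ) :
    (y w).coeff n = (if n = 0 then (x w : ℤ) else 0)
      + ∑ w' : RegVertex s, (edgeCount s r w' w : ℤ) * (y w').coeff (n - 1) := by
  have h := coeff_bfMatrix_mulVec (r := r) y w n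
  rw [hy, coeff_natCast] at h
  simp only [Subtype.coe_inj, Finset.sum_ite_eq, Finset.mem_univ, if_true] at h
  linarith

lemma coeff_eq_zero_of_neg (hy : bfMatrix s r *ᵥ y = fun v => (x v : ℤ[T;T⁻¹])) {n : ℤ}
    (hn : n < 0) (w : RegVertex s) : (y w).coeff n = 0 := by
  obtain ⟨N, hN⟩ := exists_coeff_eq_zero_of_natAbs_lt y
  rcases lt_or_ge n (-N - 1) with hlt | hge
  · exact hN w n (by omega)
  induction n, hge using Int.leInduction generalizing w with
  | base => exact hN w _ (by omega)
  | succ n _ ih =>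
    rw [coeff_eq_of_bfMatrix_mulVec_eq hy, if_neg (by omega), add_sub_cancel_right, zero_add]
    exact Finset.sum_eq_zero fun w' _ => by rw [ih (by omega) w', mul_zero]

lemma coeff_nonneg (hy : bfMatrix s r *ᵥ y = fun v => (x v : ℤ[T;T⁻¹])) (w : RegVertex s)
    (n : ℤ) : 0 ≤ (y w).coeff n := by
  rcases lt_or_ge n (-1) with hlt | hge
  · exact (coeff_eq_zero_of_neg hy (by omega) w).ge
  induction n, hge using Int.leInduction generalizing w with
  | base => exact (coeff_eq_zero_of_neg hy (by norm_num) w).ge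
  | succ n _ ih =>
    rw [coeff_eq_of_bfMatrix_mulVec_eq hy, add_sub_cancel_right]
    exact add_nonneg (by split_ifs <;> positivity)
      (Finset.sum_nonneg fun w' _ => mul_nonneg (by positivity) (ih w'))

lemma coeff_sub_one_eq_zero (hy : bfMatrix s r *ᵥ y = fun v => (x v : ℤ[T;T⁻¹])) {n : ℤ}
    (hn : n ≠ 0) (hzero : ∀ w, (y w).coeff n = 0) (w : RegVertex s) : (y w).coeff (n - 1) = 0 := by
  obtain ⟨e, he⟩ := w.2
  have hsum := coeff_bfMatrix_mulVec (r := r) y (r e) n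
  rw [hy, coeff_natCast, if_neg hn] at hsum
  simp only [hzero, ite_self, Finset.sum_const_zero, zero_sub, zero_eq_neg] at hsum
  have hterm := (Finset.sum_eq_zero_iff_of_nonneg fun w' _ =>
    mul_nonneg (Nat.cast_nonneg _) (coeff_nonneg hy w' (n - 1))).1 hsum w (Finset.mem_univ _)
  have hpos : 0 < edgeCount s r w (r e) := he ▸ edgeCount_pos s r e
  exact (mul_eq_zero.1 hterm).resolve_left (by positivity)

lemma coeff_eq_zero_of_nonneg (hy : bfMatrix s r *ᵥ y = fun v => (x v : ℤ[T;T⁻¹])) {n : ℤ}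
    (hn : 0 ≤ n) (w : RegVertex s) : (y w).coeff n = 0 := by
  obtain ⟨N, hN⟩ := exists_coeff_eq_zero_of_natAbs_lt y
  rcases lt_or_ge ((N : ℤ) + 1) n with hlt | hle
  · exact hN w n (by omega)
  induction n, hle using Int.leInductionDown generalizing w with
  | base => exact hN w _ (by omega)
  | pred n _ ih => exact coeff_sub_one_eq_zero hy (by omega) (ih (by omega)) w

theorem eq_zero_of_bfMatrix_mulVec_eq_natCast
    (hy : bfMatrix s r *ᵥ y = fun v => (x v : ℤ[T;T⁻¹])) : y = 0 :=
  funext fun w => LaurentPolynomial.ext fun n => by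
    rcases lt_or_ge n 0 with hn | hn
    exacts [coeff_eq_zero_of_neg hy hn w, coeff_eq_zero_of_nonneg hy hn w]

end BowenFranks

/-- Let `E` be a finite directed graph and `cl : ℤ^{E⁰} → BF_gr(E)` the
composite of the inclusion `ℤ^{E⁰} → ℤ[σ,σ⁻¹]^{E⁰}` with the projection onto
`BF_gr(E) = coker(I - σ·A_E^t)`.  Then `ker(cl) ∩ ℕ^{E⁰} = 0`: no nonzero
nonnegative-integer combination of vertices maps to zero in `BF_gr(E)`. -/
theorem stmt_2 {V Ed : Type} [Fintype V] [Fintype Ed] [DecidableEq V]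
    (s r : Ed → V) :
    ∀ x : V → ℕ,
      (Submodule.Quotient.mk
          (p := LinearMap.range
            (Matrix.mulVecLin
              ((Matrix.of (fun (v : V) (w : {v : V // ∃ e, s e = v}) =>
                (if v = (w : V) then 1 else 0)
                  - LaurentPolynomial.T 1 *
                    (Fintype.card {e : Ed // s e = (w : V) ∧ r e = v} : LaurentPolynomial ℤ))) :
                Matrix V {v : V // ∃ e, s e = v} (LaurentPolynomial ℤ))))
          (fun v : V => (x v : LaurentPolynomial ℤ)) = 0) → x = 0 := by
  intro x hx
  obtain ⟨y, hy⟩ := LinearMap.mem_range.1 ((Submodule.Quotient.mk_eq_zero _).1 hx)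
  change BowenFranks.bfMatrix s r *ᵥ y = _ at hy
  funext v
  have hv := congrFun hy v
  rw [BowenFranks.eq_zero_of_bfMatrix_mulVec_eq_natCast hy, mulVec_zero, Pi.zero_apply] at hv
  exact_mod_cast hv.symm
end

section
/- Let G be a group, A a G-graded ring with graded local units, Ψ the functor from unital G-graded right A-modules to unital right (G ⋉̂ A)-modules sending a graded module M to the same abelian group with action m·(χ_g ⋉̂ a) = m_g·a (where m_g is the degree-g component of m). Then Ψ is an isomorphism of categories, with inverse Φ sending a unital (G ⋉̂ A)-module N to the same abelian group graded by Φ(N)_g = Σ_{u} N·(χ_g ⋉̂ u) over graded local units u, with A-action m·a = m·(χ_g ⋉̂ a) for m ∈ Φ(N)_g. -/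
/-- A unital `G`-graded right module over the `G`-graded ring `(A, 𝒜)`: an abelian group
`M` with a biadditive, associative right `A`-action, a direct sum decomposition
`M = ⊕_g M_g` with `M_g·A_h ⊆ M_{gh}`, and `M·A = M`. -/
structure GradedRightModuleStr (G : Type) [Group G] [DecidableEq G] {A : Type}
    [NonUnitalRing A] (𝒜 : G → AddSubgroup A) (M : Type) [AddCommGroup M] where
  act : M → A → M
  act_addl : ∀ (m n : M) (a : A), act (m + n) a = act m a + act n a
  act_addr : ∀ (m : M) (a b : A), act m (a + b) = act m a + act m b
  act_mul : ∀ (m : M) (a b : A), act (act m a) b = act m (a * b)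
  grading : G → AddSubgroup M
  internal : DirectSum.IsInternal grading
  act_graded : ∀ (g h : G) (m : M) (a : A), m ∈ grading g → a ∈ 𝒜 h →
    act m a ∈ grading (g * h)
  unital : ∀ m : M, m ∈ AddSubgroup.closure {x : M | ∃ (n : M) (a : A), x = act n a}

/-- A unital right module over the (possibly nonunital) ring `S`. -/
structure RightModuleStr (S : Type) [NonUnitalRing S] (M : Type) [AddCommGroup M] where
  act : M → S → M
  act_addl : ∀ (m n : M) (a : S), act (m + n) a = act m a + act n a
  act_addr : ∀ (m : M) (a b : S), act m (a + b) = act m a + act m b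
  act_mul : ∀ (m : M) (a b : S), act (act m a) b = act m (a * b)
  unital : ∀ m : M, m ∈ AddSubgroup.closure {x : M | ∃ (n : M) (a : S), x = act n a}


/-!
Both functors are the identity on underlying groups, so everything comes down to comparing
actions on homogeneous elements and extending additively. The crossed product is additively
spanned by the `χ_g ⋉̂ b` with `b` homogeneous. For a local unit `u` of degree one,
`χ_g ⋉̂ u` acts on `Φ(N)` as a local projection onto the `g`-component: it fixes the elements
of `Φ(N)_g` it was chosen for and kills `Φ(N)_h` for `h ≠ g`, because
`(χ_h ⋉̂ u)(χ_g ⋉̂ a) = 0`. These projections make `Φ(N)` an internal direct sum, and they show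
that `m · (χ_g ⋉̂ a)` only depends on the `g`-component of `m`, which is exactly how `Ψ` acts.
-/

open DirectSum

namespace DirectSum.IsInternal

variable {ι M N : Type*} [DecidableEq ι] [AddCommGroup M] [AddCommGroup N]
  {B : ι → AddSubgroup M}

theorem addSubgroup_eq_top (h : IsInternal B) {T : AddSubgroup M} (hT : ∀ i, B i ≤ T) :
    T = ⊤ := by
  rw [eq_top_iff]
  rintro m -
  obtain ⟨x, rfl⟩ := h.surjective m
  induction x using DirectSum.induction_on with
  | zero => simp
  | of i y => simpa using hT i y.2
  | add x y hx hy => simpa using add_mem hx hy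

theorem addHom_ext (h : IsInternal B) {f g : M →+ N} (hfg : ∀ i, ∀ m ∈ B i, f m = g m) :
    f = g := by
  have := h.addSubgroup_eq_top (T := f.eqLocus g) fun i m hm => hfg i m hm
  exact AddMonoidHom.ext fun m => (this ▸ AddSubgroup.mem_top m : m ∈ f.eqLocus g)

noncomputable def lift (h : IsInternal B) (f : ι → M →+ N) : M →+ N :=
  (toAddMonoid fun i => (f i).comp (B i).subtype).comp
    (AddEquiv.ofBijective _ h).symm.toAddMonoidHom

theorem lift_of_mem (h : IsInternal B) (f : ι → M →+ N) {i : ι} {m : M} (hm : m ∈ B i) :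
    h.lift f m = f i m := by
  have : (AddEquiv.ofBijective _ h).symm m = of (fun i => B i) i ⟨m, hm⟩ := by
    rw [AddEquiv.symm_apply_eq]
    exact (DirectSum.coeAddMonoidHom_of B i ⟨m, hm⟩).symm
  simp [lift, this]

noncomputable def proj (h : IsInternal B) (i : ι) : M →+ M :=
  h.lift fun k => if k = i then AddMonoidHom.id M else 0

theorem proj_of_mem (h : IsInternal B) {k : ι} {m : M} (hm : m ∈ B k) (i : ι) :
    h.proj i m = if k = i then m else 0 := by
  rw [proj, h.lift_of_mem _ hm]
  split_ifs <;> rfl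

theorem proj_mem (h : IsInternal B) (i : ι) (m : M) : h.proj i m ∈ B i := by
  have := h.addSubgroup_eq_top (T := (B i).comap (h.proj i)) fun k m hm => by
    rw [AddSubgroup.mem_comap, h.proj_of_mem hm]
    split_ifs with hki
    · exact hki ▸ hm
    · exact zero_mem _
  exact (this ▸ AddSubgroup.mem_top m : m ∈ (B i).comap (h.proj i))

theorem map_proj {C : ι → AddSubgroup N} (hB : IsInternal B) (hC : IsInternal C) (f : M →+ N)
    (hf : ∀ i, ∀ m ∈ B i, f m ∈ C i) (i : ι) (m : M) :
    f (hB.proj i m) = hC.proj i (f m) := by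
  refine DFunLike.congr_fun (hB.addHom_ext (f := f.comp (hB.proj i))
    (g := (hC.proj i).comp f) fun k m hm => ?_) m
  simp only [AddMonoidHom.comp_apply, hB.proj_of_mem hm, hC.proj_of_mem (hf k m hm)]
  split_ifs <;> simp

end DirectSum.IsInternal

namespace DirectSum

variable {ι M : Type*} [DecidableEq ι] [AddCommGroup M] {B : ι → AddSubgroup M}

theorem isInternal_of_separating
    (hsep : ∀ i, ∀ m ∈ B i, ∃ e : M →+ M, e m = m ∧ ∀ k ≠ i, ∀ m' ∈ B k, e m' = 0)
    (htop : ⨆ i, B i = ⊤) : IsInternal B := by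
  classical
  refine ⟨(injective_iff_map_eq_zero _).2 fun x hx => DFinsupp.ext fun i => Subtype.ext ?_, ?_⟩
  · obtain ⟨e, he, hker⟩ := hsep i _ (x i).2
    have hsum : e (DirectSum.coeAddMonoidHom B x) = e (x i) := by
      rw [coeAddMonoidHom_eq_dfinsuppSum, DFinsupp.sum, map_sum]
      refine Finset.sum_eq_single i (fun k _ hki => hker k hki _ (x k).2) fun hi => ?_
      rw [DFinsupp.notMem_support_iff.1 hi, ZeroMemClass.coe_zero, map_zero]
    rw [hx, map_zero, he] at hsum
    exact hsum.symm
  · intro m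
    have hle : ⨆ i, B i ≤ (DirectSum.coeAddMonoidHom B).range := iSup_le fun i y hy =>
      AddMonoidHom.mem_range.2 ⟨of _ i ⟨y, hy⟩, DirectSum.coeAddMonoidHom_of _ _ _⟩
    exact AddMonoidHom.mem_range.1 (hle (htop ▸ AddSubgroup.mem_top m))

end DirectSum

attribute [ext] RightModuleStr GradedRightModuleStr

def IsRightLocalUnits {A : Type*} [Mul A] (𝒰 : Set A) : Prop :=
  ∀ F : Finset A, ∃ u ∈ 𝒰, ∀ a ∈ F, a * u = a

theorem AddMonoidHom.act_mul_of_closure_eq_top {R M : Type*} [NonUnitalNonAssocRing R]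
    [AddCommMonoid M] (act : M →+ R →+ M) {X : Set R}
    (hX : AddSubgroup.closure X = ⊤) (h : ∀ m, ∀ x ∈ X, ∀ y ∈ X, act (act m x) y = act m (x * y))
    (m : M) (x y : R) : act (act m x) y = act m (x * y) := by
  have hgen : ∀ x ∈ X, ∀ y, act (act m x) y = act m (x * y) := fun x hx =>
    DFunLike.congr_fun (AddMonoidHom.eq_of_eqOn_dense hX (f := act (act m x))
      (g := (act m).comp (AddMonoidHom.mulLeft x)) fun y hy => h m x hx y hy)
  exact DFunLike.congr_fun (AddMonoidHom.eq_of_eqOn_dense hX (f := (act.flip y).comp (act m))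
    (g := (act m).comp (AddMonoidHom.mulRight y)) fun x hx => hgen x hx y) x

namespace RightModuleStr

variable {R M : Type} [NonUnitalRing R] [AddCommGroup M] (sm : RightModuleStr R M)

def actHom : M →+ R →+ M :=
  AddMonoidHom.mk' (fun m => AddMonoidHom.mk' (sm.act m) (sm.act_addr m)) fun m n =>
    AddMonoidHom.ext fun a => sm.act_addl m n a

@[simp] theorem actHom_apply (m : M) (a : R) : sm.actHom m a = sm.act m a := rfl

@[simp] theorem zero_act (a : R) : sm.act 0 a = 0 := DFunLike.congr_fun sm.actHom.map_zero a

@[simp] theorem neg_act (m : M) (a : R) : sm.act (-m) a = -sm.act m a :=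
  DFunLike.congr_fun (sm.actHom.map_neg m) a

@[simp] theorem act_zero (m : M) : sm.act m 0 = 0 := (sm.actHom m).map_zero

def ofActHom (act : M →+ R →+ M) (act_mul : ∀ m a b, act (act m a) b = act m (a * b))
    (unital : ∀ m : M, m ∈ AddSubgroup.closure {x : M | ∃ (n : M) (a : R), x = act n a}) :
    RightModuleStr R M where
  act m a := act m a
  act_addl m n a := by simp
  act_addr m a b := by simp
  act_mul := act_mul
  unital := unital

theorem exists_act_eq_self_of_mem_closure {U : Set R} (hU₀ : U.Nonempty)
    (hU : ∀ u₁ ∈ U, ∀ u₂ ∈ U, ∃ u ∈ U, u₁ * u = u₁ ∧ u₂ * u = u₂) {X : Set M}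
    (hX : ∀ x ∈ X, ∃ u ∈ U, sm.act x u = x) {m : M} (hm : m ∈ AddSubgroup.closure X) :
    ∃ u ∈ U, sm.act m u = m := by
  have fixed_of_mul {x : M} {u₁ u : R} (hx : sm.act x u₁ = x) (hu : u₁ * u = u₁) :
      sm.act x u = x := by
    rw [← hx, sm.act_mul, hu]
  induction hm using AddSubgroup.closure_induction with
  | mem x hx => exact hX x hx
  | zero => exact hU₀.imp fun u hu => ⟨hu, sm.zero_act u⟩
  | add x y _ _ hx hy =>
    obtain ⟨u₁, hu₁, hx⟩ := hx
    obtain ⟨u₂, hu₂, hy⟩ := hy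
    obtain ⟨u, hu, hu₁u, hu₂u⟩ := hU u₁ hu₁ u₂ hu₂
    exact ⟨u, hu, by rw [sm.act_addl, fixed_of_mul hx hu₁u, fixed_of_mul hy hu₂u]⟩
  | neg x _ hx =>
    obtain ⟨u, hu, hx⟩ := hx
    exact ⟨u, hu, by rw [sm.neg_act, hx]⟩

end RightModuleStr

namespace GradedRightModuleStr

variable {G A M : Type} [Group G] [DecidableEq G] [NonUnitalRing A] {𝒜 : G → AddSubgroup A}
  [AddCommGroup M] (gm : GradedRightModuleStr G 𝒜 M)

@[simps]
def toRightModuleStr : RightModuleStr A M where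
  act := gm.act
  act_addl := gm.act_addl
  act_addr := gm.act_addr
  act_mul := gm.act_mul
  unital := gm.unital

theorem exists_act_eq_self {𝒰 : Set A} (h𝒰 : IsRightLocalUnits 𝒰) (m : M) :
    ∃ u ∈ 𝒰, gm.act m u = m := by
  classical
  refine gm.toRightModuleStr.exists_act_eq_self_of_mem_closure ?_ ?_ ?_ (gm.unital m)
  · obtain ⟨u, hu, -⟩ := h𝒰 ∅
    exact ⟨u, hu⟩
  · intro u₁ _ u₂ _
    obtain ⟨u, hu, h⟩ := h𝒰 {u₁, u₂}
    exact ⟨u, hu, h u₁ (by simp), h u₂ (by simp)⟩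
  · rintro _ ⟨n, a, rfl⟩
    obtain ⟨u, hu, h⟩ := h𝒰 {a}
    exact ⟨u, hu, (gm.act_mul n a u).trans (congrArg _ (h a (Finset.mem_singleton_self a)))⟩

end GradedRightModuleStr

def homogeneousSingles {G A S : Type*} [AddCommGroup A] [AddCommGroup S]
    (𝒜 : G → AddSubgroup A) (j : (G →₀ A) ≃+ S) : Set S :=
  {x | ∃ (g d : G) (b : A), b ∈ 𝒜 d ∧ x = j (Finsupp.single g b)}

theorem closure_homogeneousSingles {G A S : Type*} [DecidableEq G] [AddCommGroup A]
    [AddCommGroup S] {𝒜 : G → AddSubgroup A} (hA : IsInternal 𝒜) (j : (G →₀ A) ≃+ S) :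
    AddSubgroup.closure (homogeneousSingles 𝒜 j) = ⊤ := by
  set T := AddSubgroup.closure (homogeneousSingles 𝒜 j)
  have hsingle (g : G) (a : A) : j (Finsupp.single g a) ∈ T := by
    have := hA.addSubgroup_eq_top (T := T.comap ((j : (G →₀ A) →+ S).comp
      (Finsupp.singleAddHom g))) fun d b hb => AddSubgroup.subset_closure ⟨g, d, b, hb, rfl⟩
    exact (this ▸ AddSubgroup.mem_top a : a ∈ T.comap _)
  rw [eq_top_iff]
  rintro s -
  rw [← j.apply_symm_apply s]
  induction j.symm s using Finsupp.induction_linear with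
  | zero => simp
  | add f f' hf hf' => rw [map_add]; exact add_mem hf hf'
  | single g a => exact hsingle g a

section CrossedProduct

variable {G A S : Type} [MulOneClass G] [DecidableEq G] [NonUnitalRing A] [NonUnitalRing S]
  (𝒜 : G → AddSubgroup A) (j : (G →₀ A) ≃+ S)

/-- `j` identifies `S` with the crossed product `G ⋉̂ A`, `j (single g a)` playing `χ_g ⋉̂ a`. -/
def IsCrossedProduct : Prop :=
  ∀ (g h d : G) (b c : A), b ∈ 𝒜 d →
    j (Finsupp.single g b) * j (Finsupp.single h c) =
      if h = g * d then j (Finsupp.single g (b * c)) else 0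

variable {𝒜 j}

theorem IsCrossedProduct.single_mul_single_mul (hj : IsCrossedProduct 𝒜 j) {g d : G} {b : A}
    (hb : b ∈ 𝒜 d) (c : A) :
    j (Finsupp.single g b) * j (Finsupp.single (g * d) c) = j (Finsupp.single g (b * c)) := by
  rw [hj g (g * d) d b c hb, if_pos rfl]

theorem IsCrossedProduct.single_mul_single_same (hj : IsCrossedProduct 𝒜 j) {g : G} {b : A}
    (hb : b ∈ 𝒜 1) (c : A) :
    j (Finsupp.single g b) * j (Finsupp.single g c) = j (Finsupp.single g (b * c)) := by
  simpa using hj.single_mul_single_mul hb c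

end CrossedProduct

section Psi

variable {G A S M : Type} [Group G] [DecidableEq G] [NonUnitalRing A] [NonUnitalRing S]
  {𝒜 : G → AddSubgroup A} [AddCommGroup M]

/-- `m · (χ_g ⋉̂ a) = m_g · a`, extended additively. -/
noncomputable def psiActHom (j : (G →₀ A) ≃+ S) (gm : GradedRightModuleStr G 𝒜 M) :
    M →+ S →+ M :=
  (Finsupp.liftAddHom.toAddMonoidHom.comp
    (AddMonoidHom.pi fun g => gm.toRightModuleStr.actHom.comp (gm.internal.proj g))).compl₂
    j.symm.toAddMonoidHom

variable {j : (G →₀ A) ≃+ S} (gm : GradedRightModuleStr G 𝒜 M)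

theorem psiActHom_single (m : M) (g : G) (a : A) :
    psiActHom j gm m (j (Finsupp.single g a)) = gm.act (gm.internal.proj g m) a := by
  simp only [psiActHom, AddMonoidHom.compl₂_apply, AddEquiv.toAddMonoidHom_eq_coe,
    AddMonoidHom.coe_coe, AddEquiv.symm_apply_apply, AddMonoidHom.comp_apply,
    Finsupp.liftAddHom_apply_single]
  rfl

theorem psiActHom_single_of_mem {h : G} {m : M} (hm : m ∈ gm.grading h) (g : G) (a : A) :
    psiActHom j gm m (j (Finsupp.single g a)) = if h = g then gm.act m a else 0 := by
  rw [psiActHom_single, gm.internal.proj_of_mem hm]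
  split_ifs
  · rfl
  · exact gm.toRightModuleStr.zero_act a

theorem psiActHom_mul (hA : IsInternal 𝒜) (hj : IsCrossedProduct 𝒜 j) (m : M) (x y : S) :
    psiActHom j gm (psiActHom j gm m x) y = psiActHom j gm m (x * y) := by
  refine (psiActHom j gm).act_mul_of_closure_eq_top (closure_homogeneousSingles hA j)
    ?_ m x y
  rintro m _ ⟨g, d, b, hb, rfl⟩ _ ⟨h, -, c, -, rfl⟩
  have hmem := gm.act_graded g d _ b (gm.internal.proj_mem g m) hb
  rw [psiActHom_single gm m g b, psiActHom_single_of_mem gm hmem, hj g h d b c hb]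
  by_cases hh : h = g * d
  · rw [if_pos hh.symm, if_pos hh, psiActHom_single, gm.act_mul]
  · rw [if_neg (Ne.symm hh), if_neg hh, map_zero]

/-- `M · S` contains `m_g · a = m_g · (χ_g ⋉̂ a)`, hence all of `M · A = M`. -/
theorem psiActHom_unital (m : M) :
    m ∈ AddSubgroup.closure {x : M | ∃ (n : M) (s : S), x = psiActHom j gm n s} := by
  refine (AddSubgroup.closure_le _).2 ?_ (gm.unital m)
  rintro _ ⟨n, a, rfl⟩
  have := gm.internal.addSubgroup_eq_top (T := AddSubgroup.comap
    (gm.toRightModuleStr.actHom.flip a) (AddSubgroup.closure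
      {x : M | ∃ (n : M) (s : S), x = psiActHom j gm n s})) fun g n hn =>
    AddSubgroup.subset_closure ⟨n, j (Finsupp.single g a), by
      rw [psiActHom_single_of_mem gm hn, if_pos rfl]; rfl⟩
  exact (this ▸ AddSubgroup.mem_top n : n ∈ AddSubgroup.comap _ _)

noncomputable def psiStr (hA : IsInternal 𝒜) (hj : IsCrossedProduct 𝒜 j) :
    RightModuleStr S M :=
  .ofActHom (psiActHom j gm) (psiActHom_mul gm hA hj) (psiActHom_unital gm)

@[simp] theorem psiStr_act (hA : IsInternal 𝒜) (hj : IsCrossedProduct 𝒜 j) (m : M) (x : S) :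
    (psiStr gm hA hj).act m x = psiActHom j gm m x := rfl

theorem psiStr_hom_iff (hA : IsInternal 𝒜) (hj : IsCrossedProduct 𝒜 j) {𝒰 : Set A}
    (h𝒰₁ : ∀ u ∈ 𝒰, u ∈ 𝒜 1) (h𝒰 : IsRightLocalUnits 𝒰) {N : Type} [AddCommGroup N]
    (gn : GradedRightModuleStr G 𝒜 N) (f : M →+ N) :
    ((∀ m a, f (gm.act m a) = gn.act (f m) a) ∧ ∀ g, ∀ m ∈ gm.grading g, f m ∈ gn.grading g) ↔
      ∀ m x, f ((psiStr gm hA hj).act m x) = (psiStr gn hA hj).act (f m) x := by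
  simp only [psiStr_act]
  constructor
  · rintro ⟨hact, hgrading⟩ m
    refine DFunLike.congr_fun (AddMonoidHom.eq_of_eqOn_dense (closure_homogeneousSingles hA j)
      (f := f.comp (psiActHom j gm m)) (g := psiActHom j gn (f m)) ?_)
    rintro _ ⟨g, -, a, -, rfl⟩
    rw [AddMonoidHom.comp_apply, psiActHom_single, psiActHom_single, hact,
      gm.internal.map_proj gn.internal f hgrading]
  · intro hf
    have hgrading : ∀ g, ∀ m ∈ gm.grading g, f m ∈ gn.grading g := by
      intro g m hm
      obtain ⟨u, hu, hmu⟩ := gm.exists_act_eq_self h𝒰 m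
      have hfm := hf m (j (Finsupp.single g u))
      rw [psiActHom_single_of_mem gm hm, if_pos rfl, hmu, psiActHom_single] at hfm
      rw [hfm]
      simpa using gn.act_graded g 1 _ u (gn.internal.proj_mem g (f m)) (h𝒰₁ u hu)
    refine ⟨fun m a => ?_, hgrading⟩
    refine DFunLike.congr_fun (gm.internal.addHom_ext
      (f := f.comp (gm.toRightModuleStr.actHom.flip a))
      (g := (gn.toRightModuleStr.actHom.flip a).comp f) fun g m hm => ?_) m
    have hfm := hf m (j (Finsupp.single g a))
    rwa [psiActHom_single_of_mem gm hm, if_pos rfl,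
      psiActHom_single_of_mem gn (hgrading g m hm), if_pos rfl] at hfm

end Psi

section Phi

variable {G A S M : Type} [NonUnitalRing A] [NonUnitalRing S]
  {𝒜 : G → AddSubgroup A} {j : (G →₀ A) ≃+ S} {𝒰 : Set A} [AddCommGroup M]

def phiGrading (𝒰 : Set A) (j : (G →₀ A) ≃+ S) (sm : RightModuleStr S M) (g : G) :
    AddSubgroup M :=
  AddSubgroup.closure {x : M | ∃ (n : M) (u : A), u ∈ 𝒰 ∧ x = sm.act n (j (Finsupp.single g u))}

variable [DecidableEq G] {sm : RightModuleStr S M}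

/-- `m · a = m · (χ_g ⋉̂ a)` on the component of degree `g`, extended additively. -/
noncomputable def phiActHom (hΦ : IsInternal (phiGrading 𝒰 j sm)) : M →+ A →+ M :=
  hΦ.lift fun g => sm.actHom.compl₂ ((j : (G →₀ A) →+ S).comp (Finsupp.singleAddHom g))

variable (hΦ : IsInternal (phiGrading 𝒰 j sm))

theorem phiActHom_of_mem {g : G} {m : M} (hm : m ∈ phiGrading 𝒰 j sm g) (a : A) :
    phiActHom hΦ m a = sm.act m (j (Finsupp.single g a)) := by
  rw [phiActHom, hΦ.lift_of_mem _ hm]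
  rfl

variable [MulOneClass G] (sm : RightModuleStr S M)

theorem exists_act_single_eq_self_of_mem_phiGrading (hj : IsCrossedProduct 𝒜 j)
    (h𝒰₁ : ∀ u ∈ 𝒰, u ∈ 𝒜 1) (h𝒰 : IsRightLocalUnits 𝒰) {g : G} {m : M}
    (hm : m ∈ phiGrading 𝒰 j sm g) : ∃ u ∈ 𝒰, sm.act m (j (Finsupp.single g u)) = m := by
  classical
  have single_mul {u₁ u : A} (hu₁ : u₁ ∈ 𝒰) (h : u₁ * u = u₁) :
      j (Finsupp.single g u₁) * j (Finsupp.single g u) = j (Finsupp.single g u₁) := by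
    rw [hj.single_mul_single_same (h𝒰₁ u₁ hu₁), h]
  set U := (fun u => j (Finsupp.single g u)) '' 𝒰
  have hU₀ : U.Nonempty := by
    obtain ⟨u, hu, -⟩ := h𝒰 ∅
    exact ⟨_, u, hu, rfl⟩
  have hU : ∀ x₁ ∈ U, ∀ x₂ ∈ U, ∃ x ∈ U, x₁ * x = x₁ ∧ x₂ * x = x₂ := by
    rintro _ ⟨u₁, hu₁, rfl⟩ _ ⟨u₂, hu₂, rfl⟩
    obtain ⟨u, hu, h⟩ := h𝒰 {u₁, u₂}
    exact ⟨_, ⟨u, hu, rfl⟩, single_mul hu₁ (h u₁ (by simp)), single_mul hu₂ (h u₂ (by simp))⟩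
  have hX : ∀ x ∈ {x : M | ∃ (n : M) (u : A), u ∈ 𝒰 ∧ x = sm.act n (j (Finsupp.single g u))},
      ∃ y ∈ U, sm.act x y = x := by
    rintro _ ⟨n, u₁, hu₁, rfl⟩
    obtain ⟨u, hu, h⟩ := h𝒰 {u₁}
    exact ⟨_, ⟨u, hu, rfl⟩, by rw [sm.act_mul, single_mul hu₁ (h u₁ (by simp))]⟩
  obtain ⟨_, ⟨u, hu, rfl⟩, hmu⟩ := sm.exists_act_eq_self_of_mem_closure hU₀ hU hX hm
  exact ⟨u, hu, hmu⟩

theorem act_single_eq_zero_of_mem_phiGrading (hj : IsCrossedProduct 𝒜 j)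
    (h𝒰₁ : ∀ u ∈ 𝒰, u ∈ 𝒜 1) {g h : G} (hne : g ≠ h) {m : M} (hm : m ∈ phiGrading 𝒰 j sm h)
    (a : A) : sm.act m (j (Finsupp.single g a)) = 0 := by
  refine (AddSubgroup.closure_le (K := (sm.actHom.flip (j (Finsupp.single g a))).ker)).2 ?_ hm
  rintro _ ⟨n, u, hu, rfl⟩
  rw [SetLike.mem_coe, AddMonoidHom.mem_ker, AddMonoidHom.flip_apply, sm.actHom_apply,
    sm.act_mul, hj h g 1 u a (h𝒰₁ u hu), mul_one, if_neg hne, sm.act_zero]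

theorem act_single_mem_phiGrading (hj : IsCrossedProduct 𝒜 j) (h𝒰 : IsRightLocalUnits 𝒰)
    (n : M) (g : G) {d : G} {a : A} (ha : a ∈ 𝒜 d) :
    sm.act n (j (Finsupp.single g a)) ∈ phiGrading 𝒰 j sm (g * d) := by
  obtain ⟨u, hu, hau⟩ := h𝒰 {a}
  refine AddSubgroup.subset_closure ⟨sm.act n (j (Finsupp.single g a)), u, hu, ?_⟩
  rw [sm.act_mul, hj.single_mul_single_mul ha, hau a (Finset.mem_singleton_self a)]

theorem isInternal_phiGrading (hA : IsInternal 𝒜) (hj : IsCrossedProduct 𝒜 j)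
    (h𝒰₁ : ∀ u ∈ 𝒰, u ∈ 𝒜 1) (h𝒰 : IsRightLocalUnits 𝒰) : IsInternal (phiGrading 𝒰 j sm) := by
  refine isInternal_of_separating (fun g m hm => ?_) ?_
  · obtain ⟨u, -, hmu⟩ := exists_act_single_eq_self_of_mem_phiGrading sm hj h𝒰₁ h𝒰 hm
    exact ⟨sm.actHom.flip (j (Finsupp.single g u)), hmu,
      fun k hk m' hm' => act_single_eq_zero_of_mem_phiGrading sm hj h𝒰₁ (Ne.symm hk) hm' u⟩
  · rw [eq_top_iff]
    rintro m -
    refine (AddSubgroup.closure_le _).2 ?_ (sm.unital m)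
    rintro _ ⟨n, s, rfl⟩
    have hle : AddSubgroup.closure (homogeneousSingles 𝒜 j) ≤
        (⨆ g, phiGrading 𝒰 j sm g).comap (sm.actHom n) := by
      rw [AddSubgroup.closure_le]
      rintro _ ⟨g, d, b, hb, rfl⟩
      exact AddSubgroup.mem_iSup_of_mem _ (act_single_mem_phiGrading sm hj h𝒰 n g hb)
    rw [closure_homogeneousSingles hA j] at hle
    exact hle (AddSubgroup.mem_top s)

theorem act_single_proj (hj : IsCrossedProduct 𝒜 j) (h𝒰₁ : ∀ u ∈ 𝒰, u ∈ 𝒜 1)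
    (hΦ : IsInternal (phiGrading 𝒰 j sm)) (g : G) (m : M) (a : A) :
    sm.act (hΦ.proj g m) (j (Finsupp.single g a)) = sm.act m (j (Finsupp.single g a)) := by
  refine DFunLike.congr_fun (hΦ.addHom_ext (f := (sm.actHom.flip _).comp (hΦ.proj g))
    (g := sm.actHom.flip _) fun k m hm => ?_) m
  simp only [AddMonoidHom.comp_apply, AddMonoidHom.flip_apply, sm.actHom_apply,
    hΦ.proj_of_mem hm]
  split_ifs with hkg
  · rfl
  · rw [sm.zero_act, act_single_eq_zero_of_mem_phiGrading sm hj h𝒰₁ (Ne.symm hkg) hm]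

variable {sm}

theorem phiActHom_mul (hA : IsInternal 𝒜) (hj : IsCrossedProduct 𝒜 j)
    (h𝒰 : IsRightLocalUnits 𝒰) (m : M) (a b : A) :
    phiActHom hΦ (phiActHom hΦ m a) b = phiActHom hΦ m (a * b) := by
  refine DFunLike.congr_fun (hΦ.addHom_ext (f := ((phiActHom hΦ).flip b).comp
    ((phiActHom hΦ).flip a)) (g := (phiActHom hΦ).flip (a * b)) fun g m hm => ?_) m
  refine DFunLike.congr_fun (hA.addHom_ext (f := ((phiActHom hΦ).flip b).comp (phiActHom hΦ m))
    (g := (phiActHom hΦ m).comp (AddMonoidHom.mulRight b)) fun d a ha => ?_) a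
  simp only [AddMonoidHom.comp_apply, AddMonoidHom.flip_apply, AddMonoidHom.mulRight_apply]
  rw [phiActHom_of_mem hΦ hm, phiActHom_of_mem hΦ (act_single_mem_phiGrading sm hj h𝒰 m g ha),
    sm.act_mul, hj.single_mul_single_mul ha, phiActHom_of_mem hΦ hm]

end Phi

section Correspondence

variable {G A S M : Type} [Group G] [DecidableEq G] [NonUnitalRing A] [NonUnitalRing S]
  {𝒜 : G → AddSubgroup A} {j : (G →₀ A) ≃+ S} {𝒰 : Set A} [AddCommGroup M]
  (hA : IsInternal 𝒜) (hj : IsCrossedProduct 𝒜 j) (h𝒰₁ : ∀ u ∈ 𝒰, u ∈ 𝒜 1)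
  (h𝒰 : IsRightLocalUnits 𝒰)

noncomputable def phiStr (sm : RightModuleStr S M) : GradedRightModuleStr G 𝒜 M where
  act m a := phiActHom (isInternal_phiGrading sm hA hj h𝒰₁ h𝒰) m a
  act_addl m n a := by simp
  act_addr m a b := by simp
  act_mul := phiActHom_mul _ hA hj h𝒰
  grading := phiGrading 𝒰 j sm
  internal := isInternal_phiGrading sm hA hj h𝒰₁ h𝒰
  act_graded g h m a hm ha := by
    rw [phiActHom_of_mem _ hm]
    exact act_single_mem_phiGrading sm hj h𝒰 m g ha
  unital m := by
    have := (isInternal_phiGrading sm hA hj h𝒰₁ h𝒰).addSubgroup_eq_top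
      (T := AddSubgroup.closure {x : M | ∃ (n : M) (a : A),
        x = phiActHom (isInternal_phiGrading sm hA hj h𝒰₁ h𝒰) n a}) fun g m hm => by
      obtain ⟨u, -, hmu⟩ := exists_act_single_eq_self_of_mem_phiGrading sm hj h𝒰₁ h𝒰 hm
      exact AddSubgroup.subset_closure ⟨m, u, by rw [phiActHom_of_mem _ hm, hmu]⟩
    exact this ▸ AddSubgroup.mem_top m

theorem phiStr_act_of_mem (sm : RightModuleStr S M) {g : G} {m : M}
    (hm : m ∈ phiGrading 𝒰 j sm g) (a : A) :
    (phiStr hA hj h𝒰₁ h𝒰 sm).act m a = sm.act m (j (Finsupp.single g a)) :=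
  phiActHom_of_mem _ hm a

theorem phiStr_psiStr (gm : GradedRightModuleStr G 𝒜 M) :
    phiStr hA hj h𝒰₁ h𝒰 (psiStr gm hA hj) = gm := by
  have hgrading : phiGrading 𝒰 j (psiStr gm hA hj) = gm.grading := by
    funext g
    refine le_antisymm ((AddSubgroup.closure_le _).2 ?_) fun m hm => ?_
    · rintro _ ⟨n, u, hu, rfl⟩
      simpa [psiActHom_single] using
        gm.act_graded g 1 _ u (gm.internal.proj_mem g n) (h𝒰₁ u hu)
    · obtain ⟨u, hu, hmu⟩ := gm.exists_act_eq_self h𝒰 m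
      refine AddSubgroup.subset_closure ⟨m, u, hu, ?_⟩
      rw [psiStr_act, psiActHom_single_of_mem gm hm, if_pos rfl, hmu]
  refine GradedRightModuleStr.ext (funext₂ fun m a => ?_) hgrading
  refine DFunLike.congr_fun ((phiStr hA hj h𝒰₁ h𝒰 (psiStr gm hA hj)).internal.addHom_ext
      (f := (phiStr hA hj h𝒰₁ h𝒰 (psiStr gm hA hj)).toRightModuleStr.actHom.flip a)
    (g := gm.toRightModuleStr.actHom.flip a) fun g m hm => ?_) m
  have hm' : m ∈ gm.grading g := hgrading ▸ hm
  simp only [AddMonoidHom.flip_apply, RightModuleStr.actHom_apply,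
    GradedRightModuleStr.toRightModuleStr_act]
  rw [phiStr_act_of_mem hA hj h𝒰₁ h𝒰 _ hm]
  exact (psiActHom_single_of_mem gm hm' g a).trans (if_pos rfl)

theorem psiStr_phiStr (sm : RightModuleStr S M) :
    psiStr (phiStr hA hj h𝒰₁ h𝒰 sm) hA hj = sm := by
  refine RightModuleStr.ext (funext₂ fun m x => ?_)
  refine DFunLike.congr_fun (AddMonoidHom.eq_of_eqOn_dense (closure_homogeneousSingles hA j)
    (f := psiActHom j (phiStr hA hj h𝒰₁ h𝒰 sm) m) (g := sm.actHom m) ?_) x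
  rintro _ ⟨g, -, a, -, rfl⟩
  have hΦ := (phiStr hA hj h𝒰₁ h𝒰 sm).internal
  rw [psiActHom_single, phiStr_act_of_mem hA hj h𝒰₁ h𝒰 sm (hΦ.proj_mem g m)]
  exact act_single_proj sm hj h𝒰₁ hΦ g m a

end Correspondence

theorem stmt_6_general {G A S : Type} [Group G] [DecidableEq G] [NonUnitalRing A]
    [NonUnitalRing S]
    (𝒜 : G → AddSubgroup A)
    (hAinternal : DirectSum.IsInternal 𝒜)
    (𝒰 : Set A)
    (h𝒰hom : ∀ u ∈ 𝒰, u ∈ 𝒜 1 ∧ u * u = u)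
    (h𝒰loc : ∀ F : Finset A, ∃ u ∈ 𝒰, ∀ a ∈ F, u * a = a ∧ a * u = a)
    (j : (G →₀ A) ≃+ S)
    (hj : ∀ (g h d : G) (b c : A), b ∈ 𝒜 d →
      j (Finsupp.single g b) * j (Finsupp.single h c) =
        if h = g * d then j (Finsupp.single g (b * c)) else 0) :
    ∃ (Ψf : ∀ (M : Type) [AddCommGroup M],
        GradedRightModuleStr G 𝒜 M → RightModuleStr S M)
      (Φf : ∀ (M : Type) [AddCommGroup M],
        RightModuleStr S M → GradedRightModuleStr G 𝒜 M),
      -- description of `Ψ`: `m·(χ_g ⋉ a) = m_g·a`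
      (∀ (M : Type) [AddCommGroup M] (gm : GradedRightModuleStr G 𝒜 M)
         (g h : G) (a : A) (m : M), m ∈ gm.grading h →
           (Ψf M gm).act m (j (Finsupp.single g a)) =
             if h = g then gm.act m a else 0) ∧
      -- description of the grading of `Φ(N)`: `Φ(N)_g = Σ_{u ∈ 𝒰} N·(χ_g ⋉ u)`
      (∀ (M : Type) [AddCommGroup M] (sm : RightModuleStr S M) (g : G),
         (Φf M sm).grading g =
           AddSubgroup.closure {x : M | ∃ (n : M) (u : A), u ∈ 𝒰 ∧
             x = sm.act n (j (Finsupp.single g u))}) ∧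
      -- description of the `A`-action of `Φ(N)`: `m·a = m·(χ_g ⋉ a)` for `m ∈ Φ(N)_g`
      (∀ (M : Type) [AddCommGroup M] (sm : RightModuleStr S M) (g : G) (m : M) (a : A),
         m ∈ (Φf M sm).grading g →
           (Φf M sm).act m a = sm.act m (j (Finsupp.single g a))) ∧
      -- `Φ ∘ Ψ = id` and `Ψ ∘ Φ = id`
      (∀ (M : Type) [AddCommGroup M] (gm : GradedRightModuleStr G 𝒜 M),
         Φf M (Ψf M gm) = gm) ∧
      (∀ (M : Type) [AddCommGroup M] (sm : RightModuleStr S M),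
         Ψf M (Φf M sm) = sm) ∧
      -- the correspondence on morphisms: an additive map is a morphism of graded
      -- `A`-modules iff it is a morphism of the corresponding `S`-modules
      (∀ (M N : Type) [AddCommGroup M] [AddCommGroup N]
         (gm : GradedRightModuleStr G 𝒜 M) (gn : GradedRightModuleStr G 𝒜 N)
         (f : M →+ N),
           ((∀ (m : M) (a : A), f (gm.act m a) = gn.act (f m) a) ∧
             (∀ (g : G) (m : M), m ∈ gm.grading g → f m ∈ gn.grading g)) ↔
           (∀ (m : M) (x : S), f ((Ψf M gm).act m x) = (Ψf N gn).act (f m) x)) := by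
  have h𝒰₁ : ∀ u ∈ 𝒰, u ∈ 𝒜 1 := fun u hu => (h𝒰hom u hu).1
  have h𝒰 : IsRightLocalUnits 𝒰 := fun F =>
    (h𝒰loc F).imp fun _ ⟨hu, h⟩ => ⟨hu, fun a ha => (h a ha).2⟩
  exact ⟨fun M _ gm => psiStr gm hAinternal hj,
    fun M _ sm => phiStr hAinternal hj h𝒰₁ h𝒰 sm,
    fun M _ gm g h a m hm => psiActHom_single_of_mem gm hm g a,
    fun M _ sm g => rfl,
    fun M _ sm g m a hm => phiStr_act_of_mem hAinternal hj h𝒰₁ h𝒰 sm hm a,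
    fun M _ gm => phiStr_psiStr hAinternal hj h𝒰₁ h𝒰 gm,
    fun M _ sm => psiStr_phiStr hAinternal hj h𝒰₁ h𝒰 sm,
    fun M N _ _ gm gn f => psiStr_hom_iff gm hAinternal hj h𝒰₁ h𝒰 gn f⟩

/-- Let `G` be a group and `A` a `G`-graded ring with graded local units
(with a distinguished set `𝒰` of homogeneous idempotent local units), and let
`S = G ⋉̂ A` be the crossed product, presented by an additive isomorphism
`j : ℤ^{(G)} ⊗ A ≃ S` with multiplication rule
`(χ_g ⋉ b)(χ_h ⋉ c) = δ_{h, g·|b|} χ_g ⋉ bc` for homogeneous `b`.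
Then the functor `Ψ` sending a unital `G`-graded right `A`-module `M` to the same
abelian group with the action `m·(χ_g ⋉ a) = m_g·a` is an isomorphism between the
category of unital graded right `A`-modules and the category of unital right
`S`-modules; its inverse `Φ` sends a unital `S`-module `N` to the same abelian group
graded by `Φ(N)_g = Σ_{u ∈ 𝒰} N·(χ_g ⋉ u)`, with `A`-action `m·a = m·(χ_g ⋉ a)` for
`m ∈ Φ(N)_g`.  (Both functors are the identity on underlying additive maps; the last
clause states the induced bijection on morphisms.) -/
theorem stmt_6 {G A S : Type} [Group G] [DecidableEq G] [NonUnitalRing A]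
    [NonUnitalRing S]
    (𝒜 : G → AddSubgroup A)
    (hAinternal : DirectSum.IsInternal 𝒜)
    (hAmul : ∀ (g h : G) (a b : A), a ∈ 𝒜 g → b ∈ 𝒜 h → a * b ∈ 𝒜 (g * h))
    (𝒰 : Set A)
    (h𝒰hom : ∀ u ∈ 𝒰, u ∈ 𝒜 1 ∧ u * u = u)
    (h𝒰loc : ∀ F : Finset A, ∃ u ∈ 𝒰, ∀ a ∈ F, u * a = a ∧ a * u = a)
    (j : (G →₀ A) ≃+ S)
    (hj : ∀ (g h d : G) (b c : A), b ∈ 𝒜 d →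
      j (Finsupp.single g b) * j (Finsupp.single h c) =
        if h = g * d then j (Finsupp.single g (b * c)) else 0) :
    ∃ (Ψf : ∀ (M : Type) [AddCommGroup M],
        GradedRightModuleStr G 𝒜 M → RightModuleStr S M)
      (Φf : ∀ (M : Type) [AddCommGroup M],
        RightModuleStr S M → GradedRightModuleStr G 𝒜 M),
      -- description of `Ψ`: `m·(χ_g ⋉ a) = m_g·a`
      (∀ (M : Type) [AddCommGroup M] (gm : GradedRightModuleStr G 𝒜 M)
         (g h : G) (a : A) (m : M), m ∈ gm.grading h →
           (Ψf M gm).act m (j (Finsupp.single g a)) =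
             if h = g then gm.act m a else 0) ∧
      -- description of the grading of `Φ(N)`: `Φ(N)_g = Σ_{u ∈ 𝒰} N·(χ_g ⋉ u)`
      (∀ (M : Type) [AddCommGroup M] (sm : RightModuleStr S M) (g : G),
         (Φf M sm).grading g =
           AddSubgroup.closure {x : M | ∃ (n : M) (u : A), u ∈ 𝒰 ∧
             x = sm.act n (j (Finsupp.single g u))}) ∧
      -- description of the `A`-action of `Φ(N)`: `m·a = m·(χ_g ⋉ a)` for `m ∈ Φ(N)_g`
      (∀ (M : Type) [AddCommGroup M] (sm : RightModuleStr S M) (g : G) (m : M) (a : A),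
         m ∈ (Φf M sm).grading g →
           (Φf M sm).act m a = sm.act m (j (Finsupp.single g a))) ∧
      -- `Φ ∘ Ψ = id` and `Ψ ∘ Φ = id`
      (∀ (M : Type) [AddCommGroup M] (gm : GradedRightModuleStr G 𝒜 M),
         Φf M (Ψf M gm) = gm) ∧
      (∀ (M : Type) [AddCommGroup M] (sm : RightModuleStr S M),
         Ψf M (Φf M sm) = sm) ∧
      -- the correspondence on morphisms: an additive map is a morphism of graded
      -- `A`-modules iff it is a morphism of the corresponding `S`-modules
      (∀ (M N : Type) [AddCommGroup M] [AddCommGroup N]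
         (gm : GradedRightModuleStr G 𝒜 M) (gn : GradedRightModuleStr G 𝒜 N)
         (f : M →+ N),
           ((∀ (m : M) (a : A), f (gm.act m a) = gn.act (f m) a) ∧
             (∀ (g : G) (m : M), m ∈ gm.grading g → f m ∈ gn.grading g)) ↔
           (∀ (m : M) (x : S), f ((Ψf M gm).act m x) = (Ψf N gn).act (f m) x)) :=
  stmt_6_general 𝒜 hAinternal 𝒰 h𝒰hom h𝒰loc j hj
end

section
/- Let ℓ be a commutative unital ring, G a group, R and S unital G-graded ℓ-algebras such that either R is trivially graded or G is abelian, so that R ⊗_ℓ S is G-graded via |r ⊗ s| = |r||s| on homogeneous elements. If S is strongly graded (S_g S_h = S_{gh} for all g,h ∈ G), then R ⊗_ℓ S is strongly graded. -/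
/-- The tensor product grading on `R ⊗_ℓ S`: the degree-`g` component is spanned by the
elementary tensors `r ⊗ s` with `r`, `s` homogeneous of degrees `a`, `b` with `a·b = g`. -/
def tensorGrading {ℓ G R S : Type} [CommRing ℓ] [Group G] [Ring R] [Ring S]
    [Algebra ℓ R] [Algebra ℓ S]
    (ℛ : G → Submodule ℓ R) (𝒮 : G → Submodule ℓ S) (g : G) :
    Submodule ℓ (TensorProduct ℓ R S) :=
  Submodule.span ℓ {x | ∃ (a b : G) (r : R) (t : S),
    r ∈ ℛ a ∧ t ∈ 𝒮 b ∧ a * b = g ∧ x = r ⊗ₜ[ℓ] t}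

/-- Let `ℓ` be a commutative unital ring, `G` a group, and `R`, `S` unital
`G`-graded `ℓ`-algebras such that either `R` is trivially graded or `G` is abelian (so
that `R ⊗_ℓ S` is `G`-graded via `|r ⊗ s| = |r|·|s|`).  If `S` is strongly graded
(`S_g·S_h = S_{gh}` for all `g, h`), then `R ⊗_ℓ S` is strongly graded. -/
theorem stmt_9 {ℓ G R S : Type} [CommRing ℓ] [Group G] [DecidableEq G] [Ring R] [Ring S]
    [Algebra ℓ R] [Algebra ℓ S]
    (ℛ : G → Submodule ℓ R) (𝒮 : G → Submodule ℓ S)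
    [DirectSum.Decomposition ℛ] [DirectSum.Decomposition 𝒮]
    (hR1 : (1 : R) ∈ ℛ 1) (hS1 : (1 : S) ∈ 𝒮 1)
    (hRmul : ∀ (g h : G) (a b : R), a ∈ ℛ g → b ∈ ℛ h → a * b ∈ ℛ (g * h))
    (hSmul : ∀ (g h : G) (a b : S), a ∈ 𝒮 g → b ∈ 𝒮 h → a * b ∈ 𝒮 (g * h))
    (hcompat : (∀ g : G, g ≠ 1 → ℛ g = ⊥) ∨ (∀ a b : G, a * b = b * a))
    (hstrong : ∀ g h : G, 𝒮 g * 𝒮 h = 𝒮 (g * h)) :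
    ∀ g h : G, tensorGrading ℛ 𝒮 g * tensorGrading ℛ 𝒮 h = tensorGrading ℛ 𝒮 (g * h) := by
  intro g h
  apply le_antisymm
  · rw [tensorGrading, tensorGrading, Submodule.span_mul_span]
    apply Submodule.span_le.2
    rintro _ ⟨x, ⟨a, b, r, t, hr, ht, hab, rfl⟩, y, ⟨a', b', r', t', hr', ht', hab', rfl⟩, rfl⟩
    show (r ⊗ₜ[ℓ] t) * (r' ⊗ₜ[ℓ] t') ∈ (tensorGrading ℛ 𝒮 (g * h) : Set _)
    rw [Algebra.TensorProduct.tmul_mul_tmul]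
    rcases hcompat with hc | hc
    · by_cases ha : a = 1
      · by_cases ha' : a' = 1
        · subst ha ha'
          apply Submodule.subset_span
          exact ⟨1, b * b', r * r', t * t', by simpa using hRmul 1 1 r r' hr hr',
            hSmul _ _ _ _ ht ht',
            by rw [one_mul, ← hab, ← hab', one_mul, one_mul], rfl⟩
        · have hz : r' = 0 := by
            have := hc a' ha'
            rw [this] at hr'
            simpa using hr'
          rw [hz, mul_zero, TensorProduct.zero_tmul]
          exact Submodule.zero_mem _
      · have hz : r = 0 := by
          have := hc a ha
          rw [this] at hr
          simpa using hr
        rw [hz, zero_mul, TensorProduct.zero_tmul]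
        exact Submodule.zero_mem _
    · apply Submodule.subset_span
      refine ⟨a * a', b * b', r * r', t * t', hRmul _ _ _ _ hr hr',
        hSmul _ _ _ _ ht ht', ?_, rfl⟩
      rw [← hab, ← hab', mul_assoc, mul_assoc, ← mul_assoc a' b b', hc a' b,
        mul_assoc b a' b']
  · apply Submodule.span_le.2
    rintro _ ⟨a, b, r, t, hr, ht, hab, rfl⟩
    have hc : (a⁻¹ * g) * ((a⁻¹ * g)⁻¹ * b) = b := by group
    have ht' : t ∈ 𝒮 (a⁻¹ * g) * 𝒮 ((a⁻¹ * g)⁻¹ * b) := by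
      rw [hstrong, hc]; exact ht
    refine Submodule.mul_induction_on ht' ?_ ?_
    · intro u hu v hv
      have heq : r ⊗ₜ[ℓ] (u * v) = (r ⊗ₜ[ℓ] u) * ((1 : R) ⊗ₜ[ℓ] v) := by
        rw [Algebra.TensorProduct.tmul_mul_tmul, mul_one]
      rw [heq]
      refine Submodule.mul_mem_mul ?_ ?_
      · exact Submodule.subset_span ⟨a, a⁻¹ * g, r, u, hr, hu, by group, rfl⟩
      · refine Submodule.subset_span ⟨1, (a⁻¹ * g)⁻¹ * b, 1, v, hR1, hv, ?_, rfl⟩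
        rw [one_mul, mul_inv_rev, inv_inv, mul_assoc, hab, inv_mul_cancel_left]
    · intro x y hx hy
      rw [TensorProduct.tmul_add]
      exact add_mem hx hy
end

section
/- Let G be a group, ℓ a commutative unital ring, and R a unital G-graded ℓ-algebra with G abelian (or R trivially graded). Equip the group algebra R[G] with the grading where r·g is homogeneous of degree |r|·g for homogeneous r ∈ R. Then R[G] is strongly graded and the map R → R[G]₁, a = Σ_g a_g ↦ Σ_g a_g·g⁻¹, is an algebra isomorphism onto the degree-one component R[G]₁ = ⊕_{g∈G} R_g ⊗ g⁻¹. -/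
/-- The grading of the group algebra `R[G]` of a `G`-graded ring `R`: the degree-`d`
component is the additive span of the elements `r·g` with `r ∈ R_h` and `h·g = d`. -/
noncomputable def monAlgGrading {G R : Type} [Group G] [Ring R] (ℛ : G → AddSubgroup R) (d : G) :
    Submodule ℤ (MonoidAlgebra R G) :=
  Submodule.span ℤ {x : MonoidAlgebra R G | ∃ (h g : G) (a : R),
    a ∈ ℛ h ∧ h * g = d ∧ x = MonoidAlgebra.single g a}

/-- The map `R → R[G]`, `a = Σ_g a_g ↦ Σ_g a_g·g⁻¹`. -/
noncomputable def degShift {G R : Type} [Group G] [DecidableEq G] [Ring R]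
    (ℛ : G → AddSubgroup R) [DirectSum.Decomposition ℛ] : R → MonoidAlgebra R G :=
  fun a =>
    DirectSum.toAddMonoid
      (fun g => ((MonoidAlgebra.singleAddHom g⁻¹ : R →+ MonoidAlgebra R G).comp (ℛ g).subtype))
      (DirectSum.decompose ℛ a)

/-! Write `|a|` for the degree of a homogeneous `a ∈ R`. The product `(a·g)(b·g') = ab·gg'` has
degree `|a||b|gg'`, which is `|a|g·|b|g'` because the degrees of nonzero homogeneous elements are
central; this makes the grading of `R[G]` multiplicative, and it is strong since every `a·g` of
degree `de` factors as `(a·|a|⁻¹d)(1·d⁻¹|a|g)`. The map `a ↦ Σ a_g·g⁻¹` is additive, multiplicative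
for the same centrality reason, and injective because the `g⁻¹`-coefficient of the image of `a` is
`a_g`; its image is the degree-one part, spanned by the `r·|r|⁻¹`. -/

section Grading

open MonoidAlgebra

variable {G R : Type} [Group G] [Ring R] (ℛ : G → AddSubgroup R)

theorem single_mem_monAlgGrading {h g d : G} {a : R} (ha : a ∈ ℛ h) (hd : h * g = d) :
    single g a ∈ monAlgGrading ℛ d :=
  Submodule.subset_span ⟨h, g, a, ha, hd, rfl⟩

theorem commute_of_mem_of_ne_zero
    (hcompat : (∀ g : G, g ≠ 1 → ℛ g = ⊥) ∨ (∀ a b : G, a * b = b * a))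
    (g h : G) (a : R) (ha : a ∈ ℛ g) (ha0 : a ≠ 0) : Commute g h := by
  rcases hcompat with htriv | hcomm
  · by_cases hg : g = 1
    · rw [hg]; exact Commute.one_left h
    · rw [htriv g hg, AddSubgroup.mem_bot] at ha
      exact absurd ha ha0
  · exact hcomm g h

theorem monAlgGrading_mul_le
    (hmul : ∀ (g h : G) (a b : R), a ∈ ℛ g → b ∈ ℛ h → a * b ∈ ℛ (g * h))
    (hcomm : ∀ (g h : G) (a : R), a ∈ ℛ g → a ≠ 0 → Commute g h) (d e : G) :
    monAlgGrading ℛ d * monAlgGrading ℛ e ≤ monAlgGrading ℛ (d * e) := by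
  rw [monAlgGrading, monAlgGrading, Submodule.span_mul_span, Submodule.span_le]
  rintro _ ⟨_, ⟨h, g, a, ha, rfl, rfl⟩, _, ⟨h', g', b, hb, rfl, rfl⟩, rfl⟩
  change single g a * single g' b ∈ _
  rw [single_mul_single]
  by_cases hb0 : b = 0
  · rw [hb0, mul_zero, single_zero]
    exact Submodule.zero_mem _
  · refine single_mem_monAlgGrading ℛ (hmul _ _ _ _ ha hb) ?_
    rw [mul_assoc h h', ← mul_assoc h' g, (hcomm h' g b hb hb0).eq]
    group

theorem monAlgGrading_le_mul (hone : (1 : R) ∈ ℛ 1) (d e : G) :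
    monAlgGrading ℛ (d * e) ≤ monAlgGrading ℛ d * monAlgGrading ℛ e := by
  rw [monAlgGrading, Submodule.span_le]
  rintro _ ⟨h, g, a, ha, hhg, rfl⟩
  -- `a·g = (a·|a|⁻¹d) * (1·d⁻¹|a|g)`, with factors of degrees `d` and `e`
  have hsplit : single g a = single (h⁻¹ * d) a * single (d⁻¹ * (h * g)) (1 : R) := by
    rw [single_mul_single, mul_one]
    group
  rw [SetLike.mem_coe, hsplit]
  exact Submodule.mul_mem_mul (single_mem_monAlgGrading ℛ ha (by group))
    (single_mem_monAlgGrading ℛ hone (by rw [hhg]; group))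

theorem monAlgGrading_mul (hone : (1 : R) ∈ ℛ 1)
    (hmul : ∀ (g h : G) (a b : R), a ∈ ℛ g → b ∈ ℛ h → a * b ∈ ℛ (g * h))
    (hcomm : ∀ (g h : G) (a : R), a ∈ ℛ g → a ≠ 0 → Commute g h) (d e : G) :
    monAlgGrading ℛ d * monAlgGrading ℛ e = monAlgGrading ℛ (d * e) :=
  le_antisymm (monAlgGrading_mul_le ℛ hmul hcomm d e) (monAlgGrading_le_mul ℛ hone d e)

end Grading

section DegShift

open MonoidAlgebra

variable {G R : Type} [Group G] [DecidableEq G] [Ring R]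
  (ℛ : G → AddSubgroup R) [DirectSum.Decomposition ℛ]

noncomputable def degShiftHom : R →+ MonoidAlgebra R G :=
  (DirectSum.toAddMonoid fun g => (singleAddHom g⁻¹).comp (ℛ g).subtype).comp
    (DirectSum.decomposeAddEquiv ℛ).toAddMonoidHom

theorem degShift_add (a b : R) : degShift ℛ (a + b) = degShift ℛ a + degShift ℛ b :=
  map_add (degShiftHom ℛ) a b

theorem degShift_zero : degShift ℛ (0 : R) = 0 :=
  map_zero (degShiftHom ℛ)

theorem degShift_of_mem {g : G} {a : R} (ha : a ∈ ℛ g) : degShift ℛ a = single g⁻¹ a := by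
  rw [degShift, DirectSum.decompose_of_mem ℛ ha, DirectSum.toAddMonoid_of]
  rfl

theorem degShift_one (hone : (1 : R) ∈ ℛ 1) : degShift ℛ (1 : R) = 1 := by
  rw [degShift_of_mem ℛ hone, inv_one, one_def]

theorem coeff_degShift (a : R) (g : G) :
    (degShift ℛ a).coeff g = (DirectSum.decompose ℛ a g⁻¹ : R) := by
  refine DirectSum.Decomposition.inductionOn ℛ ?_ (fun {h} x => ?_) (fun x y hx hy => ?_) a
  · simp [degShift_zero]
  · rw [degShift_of_mem ℛ x.2, DirectSum.decompose_coe, DirectSum.of_apply]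
    split_ifs with hg
    · subst hg
      simp
    · simp [inv_eq_iff_eq_inv, hg]
  · rw [degShift_add, coeff_add, Finsupp.add_apply, hx, hy, DirectSum.decompose_add,
      DirectSum.add_apply, AddSubgroup.coe_add]

theorem degShift_injective : Function.Injective (degShift ℛ) := by
  intro a b hab
  apply (DirectSum.decompose ℛ).injective
  ext g
  rw [← inv_inv g, ← coeff_degShift, ← coeff_degShift, hab]

theorem degShift_mul_of_mem
    (hmul : ∀ (g h : G) (a b : R), a ∈ ℛ g → b ∈ ℛ h → a * b ∈ ℛ (g * h))
    (hcomm : ∀ (g h : G) (a : R), a ∈ ℛ g → a ≠ 0 → Commute g h)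
    {g h : G} {a b : R} (ha : a ∈ ℛ g) (hb : b ∈ ℛ h) :
    degShift ℛ (a * b) = degShift ℛ a * degShift ℛ b := by
  rw [degShift_of_mem ℛ ha, degShift_of_mem ℛ hb, degShift_of_mem ℛ (hmul _ _ _ _ ha hb),
    single_mul_single]
  by_cases ha0 : a = 0
  · simp [ha0]
  · rw [mul_inv_rev, (hcomm g h a ha ha0).inv_inv.eq]

theorem degShift_mul
    (hmul : ∀ (g h : G) (a b : R), a ∈ ℛ g → b ∈ ℛ h → a * b ∈ ℛ (g * h))
    (hcomm : ∀ (g h : G) (a : R), a ∈ ℛ g → a ≠ 0 → Commute g h) (a b : R) :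
    degShift ℛ (a * b) = degShift ℛ a * degShift ℛ b := by
  refine DirectSum.Decomposition.inductionOn ℛ ?_ (fun x => ?_) (fun x x' hx hx' => ?_) a
  · simp [degShift_zero]
  · refine DirectSum.Decomposition.inductionOn ℛ ?_ (fun y => ?_) (fun y y' hy hy' => ?_) b
    · simp [degShift_zero]
    · exact degShift_mul_of_mem ℛ hmul hcomm x.2 y.2
    · rw [mul_add, degShift_add, hy, hy', degShift_add, mul_add]
  · rw [add_mul, degShift_add, hx, hx', degShift_add, add_mul]

theorem mem_monAlgGrading_one_iff (x : MonoidAlgebra R G) :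
    x ∈ monAlgGrading ℛ 1 ↔ ∃ a : R, degShift ℛ a = x := by
  constructor
  · intro hx
    suffices monAlgGrading ℛ 1 ≤ AddSubgroup.toIntSubmodule (degShiftHom ℛ).range from this hx
    rw [monAlgGrading, Submodule.span_le]
    rintro _ ⟨h, g, a, ha, hhg, rfl⟩
    rw [eq_inv_of_mul_eq_one_right hhg]
    exact ⟨a, degShift_of_mem ℛ ha⟩
  · rintro ⟨a, rfl⟩
    refine DirectSum.Decomposition.inductionOn ℛ ?_ (fun {g} x => ?_) (fun x y hx hy => ?_) a
    · rw [degShift_zero]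
      exact Submodule.zero_mem _
    · rw [degShift_of_mem ℛ x.2]
      exact single_mem_monAlgGrading ℛ x.2 (mul_inv_cancel g)
    · rw [degShift_add]
      exact Submodule.add_mem _ hx hy

end DegShift

/-- Let `G` be a group and `R` a unital `G`-graded ring, with `G` abelian
(or `R` trivially graded).  Equip the group algebra `R[G]` with the grading in which
`r·g` is homogeneous of degree `|r|·g` for homogeneous `r ∈ R`.  Then `R[G]` is strongly
graded, and the map `R → R[G]₁`, `a = Σ_g a_g ↦ Σ_g a_g·g⁻¹`, is a ring isomorphism of
`R` onto the degree-one component `R[G]₁`. -/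
theorem stmt_10 {G R : Type} [Group G] [DecidableEq G] [Ring R]
    (ℛ : G → AddSubgroup R) [DirectSum.Decomposition ℛ]
    (hone : (1 : R) ∈ ℛ 1)
    (hmul : ∀ (g h : G) (a b : R), a ∈ ℛ g → b ∈ ℛ h → a * b ∈ ℛ (g * h))
    (hcompat : (∀ g : G, g ≠ 1 → ℛ g = ⊥) ∨ (∀ a b : G, a * b = b * a)) :
    -- `R[G]` is strongly graded:
    (∀ d e : G, monAlgGrading ℛ d * monAlgGrading ℛ e = monAlgGrading ℛ (d * e)) ∧
    -- `a ↦ Σ_g a_g g⁻¹` is a ring isomorphism of `R` onto the degree-one component: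
    (degShift ℛ 1 = 1) ∧
    (∀ a b : R, degShift ℛ (a + b) = degShift ℛ a + degShift ℛ b) ∧
    (∀ a b : R, degShift ℛ (a * b) = degShift ℛ a * degShift ℛ b) ∧
    Function.Injective (degShift ℛ) ∧
    (∀ x : MonoidAlgebra R G, x ∈ monAlgGrading ℛ 1 ↔ ∃ a : R, degShift ℛ a = x) := by
  have hcomm := commute_of_mem_of_ne_zero ℛ hcompat
  exact ⟨monAlgGrading_mul ℛ hone hmul hcomm, degShift_one ℛ hone, degShift_add ℛ,
    degShift_mul ℛ hmul hcomm, degShift_injective ℛ, mem_monAlgGrading_one_iff ℛ⟩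
end

section
/- Let G be a group acting on a G-graded ring B via h·(χ_g ⋉̂ c) = χ_{hg} ⋉̂ c on the crossed product G ⋉̂ B. Then there is an isomorphism of G-graded rings (G ⋉̂ B) ⋊ G ≅ M_G(B), where M_G(B) is the ring of finitely supported G×G matrices over B, graded by declaring ε_{s,t} ⊗ b homogeneous of degree s|b|t⁻¹ for homogeneous b ∈ B. Dually, for a ring A with G-action, there is an isomorphism of G-rings G ⋉̂ (A ⋊ G) ≅ M_G(A), where G acts on M_G(A) by (g·f)(x,y) = g·f(g⁻¹x, g⁻¹y). -/
/-!
Both isomorphisms are reindexings of additive generators. In (a), `(χ_h ⋉ b) ⋊ g` with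
`b ∈ B_d` goes to `ε_{h, g⁻¹hd} ⊗ b`, with inverse `ε_{s,t} ⊗ b ↦ (χ_s ⋉ b) ⋊ s d t⁻¹`; in (b),
`χ_u ⋉ (a ⋊ g)` goes to `ε_{u,ug} ⊗ α_u(a)`. These are additive bijections, so multiplicativity,
the grading and equivariance only have to be checked on generators, where the multiplication
rules of the two sides match: `(χ_h ⋉ b)(χ_{gh'} ⋉ c)` is nonzero exactly when `gh' = hd`,
i.e. when the column index `g⁻¹hd` of the first matrix unit equals the row index `h'` of the
second.
-/

open Finsupp

theorem AddMonoidHom.map_mul_of_addClosure_eq_top {R R' : Type*} [NonUnitalNonAssocSemiring R]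
    [NonUnitalNonAssocSemiring R'] (f : R →+ R') {s : Set R} (hs : AddSubmonoid.closure s = ⊤)
    (h : ∀ x ∈ s, ∀ y ∈ s, f (x * y) = f x * f y) (x y : R) : f (x * y) = f x * f y := by
  induction x using AddSubmonoid.dense_induction s hs with
  | mem x hx =>
    induction y using AddSubmonoid.dense_induction s hs with
    | mem y hy => exact h x hx y hy
    | zero => simp
    | add y₁ y₂ h₁ h₂ => simp only [mul_add, map_add, h₁, h₂]
  | zero => simp
  | add x₁ x₂ h₁ h₂ => simp only [add_mul, map_add, h₁, h₂]

theorem AddSubmonoid.closure_image_eq_top {M N : Type*} [AddZeroClass M] [AddZeroClass N]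
    (e : M ≃+ N) {s : Set M} (hs : AddSubmonoid.closure s = ⊤) :
    AddSubmonoid.closure (e '' s) = ⊤ := by
  rw [← AddMonoidHom.map_mclosure, hs]
  exact AddSubmonoid.map_equiv_top e

theorem Finsupp.addClosure_single_eq_top {α M : Type*} [AddZeroClass M] {s : Set M}
    (hs : AddSubmonoid.closure s = ⊤) :
    AddSubmonoid.closure {f : α →₀ M | ∃ a, ∃ m ∈ s, f = single a m} = ⊤ := by
  refine top_unique (le_of_eq_of_le add_closure_setOfPred_eq_single.symm
    (AddSubmonoid.closure_le.2 ?_))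
  rintro _ ⟨a, m, rfl⟩
  induction m using AddSubmonoid.dense_induction s hs with
  | mem m hm => exact AddSubmonoid.subset_closure ⟨a, m, hm, rfl⟩
  | zero => simp [zero_mem]
  | add m m' h h' =>
    rw [SetLike.mem_coe, single_add]
    exact add_mem h h'

namespace DirectSum.Decomposition

variable {ι M σ N : Type*} [DecidableEq ι] [AddCommMonoid M] [SetLike σ M] [AddSubmonoidClass σ M]
  (ℳ : ι → σ) [Decomposition ℳ] [AddCommMonoid N]

theorem addClosure_isHomogeneousElem :
    AddSubmonoid.closure {m : M | SetLike.IsHomogeneousElem ℳ m} = ⊤ :=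
  top_unique fun m _ => Decomposition.inductionOn ℳ (zero_mem _)
    (fun m => AddSubmonoid.subset_closure (SetLike.isHomogeneousElem_coe m))
    (fun _ _ => add_mem) m

theorem addHom_ext {f g : M →+ N} (h : ∀ i, ∀ m ∈ ℳ i, f m = g m) : f = g :=
  AddMonoidHom.eq_of_eqOn_denseM (addClosure_isHomogeneousElem ℳ) fun m ⟨i, hi⟩ => h i m hi

def liftAddHom (f : ∀ i, ℳ i →+ N) : M →+ N :=
  (toAddMonoid f).comp (decomposeAddEquiv ℳ).toAddMonoidHom

theorem liftAddHom_of_mem (f : ∀ i, ℳ i →+ N) {i : ι} {m : M} (hm : m ∈ ℳ i) :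
    liftAddHom ℳ f m = f i ⟨m, hm⟩ := by
  simp [liftAddHom, decompose_of_mem ℳ hm]

end DirectSum.Decomposition

noncomputable section GradedMatrix

open DirectSum

variable {G B σ : Type*} [Group G] [DecidableEq G] [AddCommMonoid B] [SetLike σ B]
  [AddSubmonoidClass σ B] (𝒷 : G → σ) [Decomposition 𝒷]

def gradedToMatrix : (G →₀ G →₀ B) →+ (G × G →₀ B) :=
  liftAddHom fun g => liftAddHom fun h => Decomposition.liftAddHom 𝒷 fun d =>
    (singleAddHom (h, g⁻¹ * h * d)).comp (AddSubmonoidClass.subtype (𝒷 d))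

def matrixToGraded : (G × G →₀ B) →+ (G →₀ G →₀ B) :=
  liftAddHom fun p => Decomposition.liftAddHom 𝒷 fun d =>
    ((singleAddHom (p.1 * d * p.2⁻¹)).comp (singleAddHom p.1)).comp
      (AddSubmonoidClass.subtype (𝒷 d))

variable {𝒷}

theorem gradedToMatrix_single_single {g h d : G} {b : B} (hb : b ∈ 𝒷 d) :
    gradedToMatrix 𝒷 (single g (single h b)) = single (h, g⁻¹ * h * d) b := by
  simp only [gradedToMatrix, liftAddHom_apply_single, Decomposition.liftAddHom_of_mem 𝒷 _ hb]
  rfl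

theorem matrixToGraded_single {p : G × G} {d : G} {b : B} (hb : b ∈ 𝒷 d) :
    matrixToGraded 𝒷 (single p b) = single (p.1 * d * p.2⁻¹) (single p.1 b) := by
  simp only [matrixToGraded, liftAddHom_apply_single, Decomposition.liftAddHom_of_mem 𝒷 _ hb]
  rfl

variable (𝒷)

def gradedMatrixEquiv : (G →₀ G →₀ B) ≃+ (G × G →₀ B) :=
  AddMonoidHom.toAddEquiv (gradedToMatrix 𝒷) (matrixToGraded 𝒷)
    (addHom_ext' fun g => addHom_ext' fun h => Decomposition.addHom_ext 𝒷 fun d b hb => by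
      simp only [AddMonoidHom.comp_apply, singleAddHom_apply, AddMonoidHom.id_apply,
        gradedToMatrix_single_single hb, matrixToGraded_single hb]
      rw [show h * d * (g⁻¹ * h * d)⁻¹ = g by group])
    (addHom_ext' fun p => Decomposition.addHom_ext 𝒷 fun d b hb => by
      simp only [AddMonoidHom.comp_apply, singleAddHom_apply, AddMonoidHom.id_apply,
        gradedToMatrix_single_single hb, matrixToGraded_single hb]
      rw [show (p.1 * d * p.2⁻¹)⁻¹ * p.1 * d = p.2 by group])

theorem gradedMatrixEquiv_single_single {g h d : G} {b : B} (hb : b ∈ 𝒷 d) :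
    gradedMatrixEquiv 𝒷 (single g (single h b)) = single (h, g⁻¹ * h * d) b :=
  gradedToMatrix_single_single hb

end GradedMatrix

noncomputable section TwistedMatrix

variable {G A : Type*} [Group G] [AddCommMonoid A] (e : G → A ≃+ A)

def twistedToMatrix : (G →₀ G →₀ A) →+ (G × G →₀ A) :=
  liftAddHom fun u => liftAddHom fun g => (singleAddHom (u, u * g)).comp (e u).toAddMonoidHom

def matrixToTwisted : (G × G →₀ A) →+ (G →₀ G →₀ A) :=
  liftAddHom fun p => ((singleAddHom p.1).comp (singleAddHom (p.1⁻¹ * p.2))).comp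
    (e p.1).symm.toAddMonoidHom

variable {e}

theorem twistedToMatrix_single_single (u g : G) (a : A) :
    twistedToMatrix e (single u (single g a)) = single (u, u * g) (e u a) := by
  simp only [twistedToMatrix, liftAddHom_apply_single]
  rfl

theorem matrixToTwisted_single (p : G × G) (a : A) :
    matrixToTwisted e (single p a) = single p.1 (single (p.1⁻¹ * p.2) ((e p.1).symm a)) := by
  simp only [matrixToTwisted, liftAddHom_apply_single]
  rfl

variable (e)

def twistedMatrixEquiv : (G →₀ G →₀ A) ≃+ (G × G →₀ A) :=
  AddMonoidHom.toAddEquiv (twistedToMatrix e) (matrixToTwisted e)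
    (addHom_ext' fun u => addHom_ext fun g a => by
      simp [twistedToMatrix_single_single, matrixToTwisted_single])
    (addHom_ext fun p a => by
      simp [twistedToMatrix_single_single, matrixToTwisted_single])

theorem twistedMatrixEquiv_single_single (u g : G) (a : A) :
    twistedMatrixEquiv e (single u (single g a)) = single (u, u * g) (e u a) :=
  twistedToMatrix_single_single u g a

end TwistedMatrix

section GradedDuality

open DirectSum

variable {G B S C MatB : Type*} [DecidableEq G]

section Additive

variable [AddCommGroup B] [AddCommGroup S] [AddCommGroup C] [AddCommGroup MatB]
  (𝒷 : G → AddSubgroup B) [Decomposition 𝒷]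
  (jS : (G →₀ B) ≃+ S) (jC : (G →₀ S) ≃+ C) (jMB : (G × G →₀ B) ≃+ MatB)

theorem addClosure_gradedGenerators :
    AddSubmonoid.closure (jC '' {f | ∃ g, ∃ s ∈ jS '' {f | ∃ h, ∃ b ∈
      {b | SetLike.IsHomogeneousElem 𝒷 b}, f = single h b}, f = single g s}) = ⊤ :=
  AddSubmonoid.closure_image_eq_top jC <| addClosure_single_eq_top <|
    AddSubmonoid.closure_image_eq_top jS <| addClosure_single_eq_top <|
      Decomposition.addClosure_isHomogeneousElem 𝒷

variable [Group G]

noncomputable def gradedDuality : C ≃+ MatB :=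
  jC.symm.trans ((mapRange.addEquiv jS.symm).trans ((gradedMatrixEquiv 𝒷).trans jMB))

variable {𝒷}

theorem gradedDuality_single {g h d : G} {b : B} (hb : b ∈ 𝒷 d) :
    gradedDuality 𝒷 jS jC jMB (jC (single g (jS (single h b)))) =
      jMB (single (h, g⁻¹ * h * d) b) := by
  simp [gradedDuality, gradedMatrixEquiv_single_single 𝒷 hb]

variable (𝒷)

theorem gradedDuality_mem_closure_iff (g : G) (x : C) :
    x ∈ AddSubgroup.closure {y : C | ∃ z : S, y = jC (single g z)} ↔
      gradedDuality 𝒷 jS jC jMB x ∈ AddSubgroup.closure {y : MatB | ∃ (p : G × G) (d : G) (b : B),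
        b ∈ 𝒷 d ∧ p.1 * d * p.2⁻¹ = g ∧ y = jMB (single p b)} := by
  set e := gradedDuality 𝒷 jS jC jMB
  suffices (AddSubgroup.closure {y : C | ∃ z : S, y = jC (single g z)}).map e.toAddMonoidHom =
      AddSubgroup.closure {y : MatB | ∃ (p : G × G) (d : G) (b : B),
        b ∈ 𝒷 d ∧ p.1 * d * p.2⁻¹ = g ∧ y = jMB (single p b)} by
    rw [← this]
    exact (AddSubgroup.mem_map_iff_mem e.injective).symm
  rw [AddMonoidHom.map_closure]
  apply le_antisymm
  · refine (AddSubgroup.closure_le _).2 ?_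
    rintro _ ⟨_, ⟨z, rfl⟩, rfl⟩
    induction z using AddSubmonoid.dense_induction _ (AddSubmonoid.closure_image_eq_top jS <|
        addClosure_single_eq_top <| Decomposition.addClosure_isHomogeneousElem 𝒷) with
    | mem z hz =>
      obtain ⟨_, ⟨h, b, ⟨d, hb⟩, rfl⟩, rfl⟩ := hz
      refine AddSubgroup.subset_closure ⟨(h, g⁻¹ * h * d), d, b, hb, by group, ?_⟩
      exact gradedDuality_single jS jC jMB hb
    | zero => simp [zero_mem]
    | add z₁ z₂ h₁ h₂ =>
      simp only [single_add, map_add, SetLike.mem_coe] at *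
      exact add_mem h₁ h₂
  · refine AddSubgroup.closure_mono ?_
    rintro _ ⟨p, d, b, hb, rfl, rfl⟩
    refine ⟨jC (single (p.1 * d * p.2⁻¹) (jS (single p.1 b))), ⟨_, rfl⟩, ?_⟩
    simp only [AddEquiv.toAddMonoidHom_eq_coe, AddMonoidHom.coe_coe, e,
      gradedDuality_single jS jC jMB hb]
    congr
    group

end Additive

variable [Group G] [NonUnitalRing B] [NonUnitalRing S] [NonUnitalRing C] [NonUnitalRing MatB]
  {𝒷 : G → AddSubgroup B} [Decomposition 𝒷]
  {jS : (G →₀ B) ≃+ S} {jC : (G →₀ S) ≃+ C} {jMB : (G × G →₀ B) ≃+ MatB}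

theorem gradedDuality_map_mul
    (hBmul : ∀ (g h : G) (a b : B), a ∈ 𝒷 g → b ∈ 𝒷 h → a * b ∈ 𝒷 (g * h))
    (hjS : ∀ (g h d : G) (b c : B), b ∈ 𝒷 d →
      jS (single g b) * jS (single h c) = if h = g * d then jS (single g (b * c)) else 0)
    {αS : G →* RingAut S} (hαS : ∀ (g h : G) (b : B), αS g (jS (single h b)) = jS (single (g * h) b))
    (hjC : ∀ (g h : G) (x y : S),
      jC (single g x) * jC (single h y) = jC (single (g * h) (x * αS g y)))
    (hjMB : ∀ (p q : G × G) (b c : B), jMB (single p b) * jMB (single q c) =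
      if p.2 = q.1 then jMB (single (p.1, q.2) (b * c)) else 0)
    (x y : C) :
    gradedDuality 𝒷 jS jC jMB (x * y) =
      gradedDuality 𝒷 jS jC jMB x * gradedDuality 𝒷 jS jC jMB y := by
  refine (gradedDuality 𝒷 jS jC jMB).toAddMonoidHom.map_mul_of_addClosure_eq_top
    (addClosure_gradedGenerators 𝒷 jS jC) ?_ x y
  rintro _ ⟨_, ⟨g, _, ⟨_, ⟨h, b, ⟨d, hb⟩, rfl⟩, rfl⟩, rfl⟩, rfl⟩
    _ ⟨_, ⟨g', _, ⟨_, ⟨h', c, ⟨d', hc⟩, rfl⟩, rfl⟩, rfl⟩, rfl⟩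
  simp only [AddEquiv.toAddMonoidHom_eq_coe, AddMonoidHom.coe_coe]
  have hcond : g⁻¹ * h * d = h' ↔ g * h' = h * d := by
    rw [mul_assoc, inv_mul_eq_iff_eq_mul, eq_comm]
  rw [hjC, hαS, hjS _ _ _ _ _ hb, gradedDuality_single jS jC jMB hb,
    gradedDuality_single jS jC jMB hc, hjMB]
  dsimp only
  by_cases hgh : g * h' = h * d
  · rw [if_pos hgh, if_pos (hcond.2 hgh), gradedDuality_single jS jC jMB (hBmul _ _ _ _ hb hc)]
    rw [← hcond.2 hgh]
    congr 3
    group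
  · rw [if_neg hgh, if_neg (mt hcond.1 hgh), single_zero, map_zero, map_zero]

end GradedDuality

section ActionDuality

variable {G A T MatA : Type*}

section Additive

variable [AddCommMonoid A] [AddCommMonoid T] [AddCommMonoid MatA]
  (jT : (G →₀ G →₀ A) ≃+ T) (jMA : (G × G →₀ A) ≃+ MatA)

theorem addClosure_actionGenerators :
    AddSubmonoid.closure (jT '' {f | ∃ u, ∃ c ∈ {c : G →₀ A | ∃ g a, c = single g a},
      f = single u c}) = ⊤ :=
  AddSubmonoid.closure_image_eq_top jT <| addClosure_single_eq_top add_closure_setOfPred_eq_single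

variable [Group G] (e : G → A ≃+ A)

noncomputable def actionDuality : T ≃+ MatA :=
  jT.symm.trans ((twistedMatrixEquiv e).trans jMA)

theorem actionDuality_single (u g : G) (a : A) :
    actionDuality jT jMA e (jT (single u (single g a))) = jMA (single (u, u * g) (e u a)) := by
  simp [actionDuality, twistedMatrixEquiv_single_single]

end Additive

variable [Group G] [NonUnitalRing A] [NonUnitalRing T] [NonUnitalRing MatA]
  {jT : (G →₀ G →₀ A) ≃+ T} {jMA : (G × G →₀ A) ≃+ MatA} {α : G →* RingAut A}

theorem actionDuality_map_mul [DecidableEq G]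
    (hjT : ∀ (u v g h : G) (a b : A),
      jT (single u (single g a)) * jT (single v (single h b)) =
        if v = u * g then jT (single u (single (g * h) (a * α g b))) else 0)
    (hjMA : ∀ (p q : G × G) (a b : A), jMA (single p a) * jMA (single q b) =
      if p.2 = q.1 then jMA (single (p.1, q.2) (a * b)) else 0)
    (x y : T) :
    actionDuality jT jMA (fun u => (α u).toAddEquiv) (x * y) =
      actionDuality jT jMA (fun u => (α u).toAddEquiv) x *
        actionDuality jT jMA (fun u => (α u).toAddEquiv) y := by
  refine (actionDuality jT jMA _).toAddMonoidHom.map_mul_of_addClosure_eq_top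
    (addClosure_actionGenerators jT) ?_ x y
  rintro _ ⟨_, ⟨u, _, ⟨g, a, rfl⟩, rfl⟩, rfl⟩ _ ⟨_, ⟨v, _, ⟨h, b, rfl⟩, rfl⟩, rfl⟩
  simp only [AddEquiv.toAddMonoidHom_eq_coe, AddMonoidHom.coe_coe]
  rw [hjT, actionDuality_single, actionDuality_single, hjMA]
  dsimp only
  by_cases hv : v = u * g
  · subst hv
    rw [if_pos rfl, if_pos rfl, actionDuality_single]
    simp only [RingEquiv.toAddEquiv_eq_coe, RingEquiv.coe_toAddEquiv, map_mul, RingAut.mul_apply,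
      mul_assoc]
  · rw [if_neg hv, if_neg (Ne.symm hv), map_zero]

theorem actionDuality_equivariant {αT : G →* RingAut T} {αM : G →* RingAut MatA}
    (hαT : ∀ (g u : G) (c : G →₀ A), αT g (jT (single u c)) = jT (single (g * u) c))
    (hαM : ∀ (g : G) (p : G × G) (a : A),
      αM g (jMA (single p a)) = jMA (single (g * p.1, g * p.2) (α g a)))
    (g : G) (x : T) :
    actionDuality jT jMA (fun u => (α u).toAddEquiv) (αT g x) =
      αM g (actionDuality jT jMA (fun u => (α u).toAddEquiv) x) := by
  set e := actionDuality jT jMA (fun u => (α u).toAddEquiv)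
  suffices e.toAddMonoidHom.comp (αT g).toAddEquiv.toAddMonoidHom =
      (αM g).toAddEquiv.toAddMonoidHom.comp e.toAddMonoidHom from DFunLike.congr_fun this x
  refine AddMonoidHom.eq_of_eqOn_denseM (addClosure_actionGenerators jT) ?_
  rintro _ ⟨_, ⟨u, _, ⟨h, a, rfl⟩, rfl⟩, rfl⟩
  simp [e, hαT, hαM, actionDuality_single, mul_assoc, map_mul]

end ActionDuality

/-- (a) For a `G`-graded ring `B` with crossed product `S = G ⋉̂ B`
(carrying the `G`-action `h·(χ_g ⋉ c) = χ_{hg} ⋉ c`), there is an isomorphism of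
`G`-graded rings `(G ⋉̂ B) ⋊ G ≅ M_G(B)`, where `M_G(B)` is the ring of finitely
supported `G×G` matrices over `B`, graded by declaring `ε_{s,t} ⊗ b` homogeneous of
degree `s·|b|·t⁻¹` for homogeneous `b`; the isomorphism sends `(χ_h ⋉ b) ⋊ g` to
`ε_{h, g⁻¹hd} ⊗ b` for `b ∈ B_d`.
(b) Dually, for a ring `A` with a `G`-action `α`, there is a `G`-equivariant ring
isomorphism `G ⋉̂ (A ⋊ G) ≅ M_G(A)` (with action `(g·f)(x,y) = g·f(g⁻¹x, g⁻¹y)` on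
matrices), sending `χ_s ⋉ (a ⋊ g)` to `ε_{s,sg} ⊗ α_s(a)`.
All rings in sight are presented by additive isomorphisms (`jS`, `jC`, `jMB`, `jT`,
`jMA`) from the corresponding groups of finitely supported functions, subject to the
multiplication rules of the crossed products `G ⋉̂ -`, `- ⋊ G` and of matrix rings. -/
theorem stmt_11 {G : Type} [Group G] [DecidableEq G]
    -- part (a): the graded case
    {B S C MatB : Type} [Ring B] [NonUnitalRing S] [NonUnitalRing C] [NonUnitalRing MatB]
    (𝒷 : G → AddSubgroup B) [DirectSum.Decomposition 𝒷]
    (hBmul : ∀ (g h : G) (a b : B), a ∈ 𝒷 g → b ∈ 𝒷 h → a * b ∈ 𝒷 (g * h))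
    (jS : (G →₀ B) ≃+ S)
    (hjS : ∀ (g h d : G) (b c : B), b ∈ 𝒷 d →
      jS (Finsupp.single g b) * jS (Finsupp.single h c) =
        if h = g * d then jS (Finsupp.single g (b * c)) else 0)
    (αS : G →* RingAut S)
    (hαS : ∀ (g h : G) (b : B),
      αS g (jS (Finsupp.single h b)) = jS (Finsupp.single (g * h) b))
    (jC : (G →₀ S) ≃+ C)
    (hjC : ∀ (g h : G) (x y : S),
      jC (Finsupp.single g x) * jC (Finsupp.single h y) =
        jC (Finsupp.single (g * h) (x * αS g y)))
    (jMB : ((G × G) →₀ B) ≃+ MatB)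
    (hjMB : ∀ (p q : G × G) (b c : B),
      jMB (Finsupp.single p b) * jMB (Finsupp.single q c) =
        if p.2 = q.1 then jMB (Finsupp.single (p.1, q.2) (b * c)) else 0)
    -- part (b): the equivariant case
    {A T MatA : Type} [Ring A] [NonUnitalRing T] [NonUnitalRing MatA]
    (α : G →* RingAut A)
    (jT : (G →₀ (G →₀ A)) ≃+ T)
    (hjT : ∀ (u v g h : G) (a b : A),
      jT (Finsupp.single u (Finsupp.single g a)) *
          jT (Finsupp.single v (Finsupp.single h b)) =
        if v = u * g
        then jT (Finsupp.single u (Finsupp.single (g * h) (a * α g b))) else 0)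
    (jMA : ((G × G) →₀ A) ≃+ MatA)
    (hjMA : ∀ (p q : G × G) (a b : A),
      jMA (Finsupp.single p a) * jMA (Finsupp.single q b) =
        if p.2 = q.1 then jMA (Finsupp.single (p.1, q.2) (a * b)) else 0)
    (αT : G →* RingAut T)
    (hαT : ∀ (g u : G) (c : G →₀ A),
      αT g (jT (Finsupp.single u c)) = jT (Finsupp.single (g * u) c))
    (αM : G →* RingAut MatA)
    (hαM : ∀ (g : G) (p : G × G) (a : A),
      αM g (jMA (Finsupp.single p a)) =
        jMA (Finsupp.single (g * p.1, g * p.2) (α g a))) :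
    -- (a) `(G ⋉̂ B) ⋊ G ≅ M_G(B)` as `G`-graded rings
    (∃ e : C ≃+* MatB,
      (∀ (g h d : G) (b : B), b ∈ 𝒷 d →
        e (jC (Finsupp.single g (jS (Finsupp.single h b)))) =
          jMB (Finsupp.single (h, g⁻¹ * h * d) b)) ∧
      (∀ (g : G) (x : C),
        x ∈ AddSubgroup.closure {y : C | ∃ z : S, y = jC (Finsupp.single g z)} ↔
        e x ∈ AddSubgroup.closure {y : MatB | ∃ (p : G × G) (d : G) (b : B),
          b ∈ 𝒷 d ∧ p.1 * d * p.2⁻¹ = g ∧ y = jMB (Finsupp.single p b)})) ∧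
    -- (b) `G ⋉̂ (A ⋊ G) ≅ M_G(A)` as `G`-rings
    (∃ e : T ≃+* MatA,
      (∀ (u g : G) (a : A),
        e (jT (Finsupp.single u (Finsupp.single g a))) =
          jMA (Finsupp.single (u, u * g) (α u a))) ∧
      (∀ (g : G) (x : T), e (αT g x) = αM g (e x))) :=
  ⟨⟨{ gradedDuality 𝒷 jS jC jMB with
        map_mul' := gradedDuality_map_mul hBmul hjS hαS hjC hjMB },
      fun _ _ _ _ hb => gradedDuality_single jS jC jMB hb,
      gradedDuality_mem_closure_iff 𝒷 jS jC jMB⟩,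
    ⟨{ actionDuality jT jMA (fun u => (α u).toAddEquiv) with
        map_mul' := actionDuality_map_mul hjT hjMA },
      actionDuality_single jT jMA _,
      actionDuality_equivariant hαT hαM⟩⟩
end

section
/- Let G be a group, A a ring with a G-action, and X a G-set. Then the linear map M_G(M_X(A)) → M_{|X|}(M_G(A)) determined by ε_{s,t} ⊗ ε_{x,y} ⊗ a ↦ ε_{s⁻¹x, t⁻¹y} ⊗ ε_{s,t} ⊗ a is a G-equivariant ring isomorphism, natural in X and A, where G acts on M_G(M_X A) by (g·f)(s,t) = g·f(g⁻¹s, g⁻¹t) (with the action on M_X A given by acting on X and on A) and on M_{|X|}(M_G A) via the action on M_G A only (trivial action on the index set |X|). -/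
/-
The map only permutes the matrix units: writing a unit of `M_G(M_X A)` as
`ε_{s,t} ⊗ ε_{x,y} ⊗ a`, the reindexing `(s, t, x, y) ↦ (s⁻¹x, t⁻¹y, s, t)` is a bijection, so
the map is an additive isomorphism. Since `t⁻¹y = s'⁻¹x'` and `t = s'` together say exactly that
`t = s'` and `y = x'`, it preserves products of matrix units, hence is multiplicative. The two
`G`-actions and the naturality squares likewise agree on matrix units, and additive maps that agree
on matrix units are equal.
-/

namespace Finsupp

theorem addHom_ext_single_single {α β M N : Type*} [AddCommMonoid M] [AddZeroClass N]
    ⦃φ ψ : (α →₀ β →₀ M) →+ N⦄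
    (h : ∀ a b m, φ (single a (single b m)) = ψ (single a (single b m))) : φ = ψ :=
  addHom_ext' fun a => addHom_ext' fun b => AddMonoidHom.ext fun m => h a b m

end Finsupp

section MatrixUnits

variable {α β M : Type*} [AddCommMonoid M]

theorem AddEquiv.addMonoidHom_ext_single_single {P N : Type*} [AddCommMonoid P]
    [AddZeroClass N] (j : (α →₀ β →₀ M) ≃+ P) ⦃φ ψ : P →+ N⦄
    (h : ∀ a b m, φ (j (Finsupp.single a (Finsupp.single b m))) =
      ψ (j (Finsupp.single a (Finsupp.single b m)))) :
    φ = ψ := by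
  have hj : φ.comp j.toAddMonoidHom = ψ.comp j.toAddMonoidHom :=
    Finsupp.addHom_ext_single_single h
  ext p
  simpa using DFunLike.congr_fun hj (j.symm p)

theorem AddMonoidHom.map_mul_of_map_mul_single_single {R S : Type*}
    [NonUnitalNonAssocSemiring R] [NonUnitalNonAssocSemiring S]
    (j : (α →₀ β →₀ M) ≃+ R) (e : R →+ S)
    (h : ∀ a b m a' b' m',
      e (j (Finsupp.single a (Finsupp.single b m)) * j (Finsupp.single a' (Finsupp.single b' m'))) =
        e (j (Finsupp.single a (Finsupp.single b m))) *
          e (j (Finsupp.single a' (Finsupp.single b' m'))))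
    (p q : R) :
    e (p * q) = e p * e q := by
  have hleft : ∀ a b m, let u := j (Finsupp.single a (Finsupp.single b m))
      e.comp (AddMonoidHom.mulLeft u) = (AddMonoidHom.mulLeft (e u)).comp e := fun a b m =>
    j.addMonoidHom_ext_single_single fun a' b' m' => h a b m a' b' m'
  have hright : e.comp (AddMonoidHom.mulRight q) = (AddMonoidHom.mulRight (e q)).comp e :=
    j.addMonoidHom_ext_single_single fun a b m => DFunLike.congr_fun (hleft a b m) q
  exact DFunLike.congr_fun hright p

end MatrixUnits

section Twist

variable {G X A : Type*} [Group G] [MulAction G X] [AddCommMonoid A]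

variable (G X) in
def twistIndex : (G × G) × (X × X) ≃ (X × X) × (G × G) where
  toFun z := ((z.1.1⁻¹ • z.2.1, z.1.2⁻¹ • z.2.2), z.1)
  invFun w := (w.2, (w.2.1 • w.1.1, w.2.2 • w.1.2))
  left_inv z := by simp
  right_inv w := by simp

variable (A) in
noncomputable def twistAddEquiv :
    ((G × G) →₀ ((X × X) →₀ A)) ≃+ ((X × X) →₀ ((G × G) →₀ A)) :=
  Finsupp.curryAddEquiv.symm.trans <|
    (Finsupp.domCongr (twistIndex G X)).trans Finsupp.curryAddEquiv

theorem twistAddEquiv_single_single (p : G × G) (x : X × X) (a : A) :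
    twistAddEquiv A (Finsupp.single p (Finsupp.single x a)) =
      Finsupp.single (p.1⁻¹ • x.1, p.2⁻¹ • x.2) (Finsupp.single p a) := by
  simp [twistAddEquiv, twistIndex]

theorem inv_smul_eq_inv_smul_and_eq_iff (s t : G) (x y : X) :
    s⁻¹ • x = t⁻¹ • y ∧ s = t ↔ s = t ∧ x = y := by
  constructor
  · rintro ⟨hxy, rfl⟩
    exact ⟨rfl, smul_left_cancel _ hxy⟩
  · rintro ⟨rfl, rfl⟩
    exact ⟨rfl, rfl⟩

end Twist

/-- Let `G` be a group, `A` a ring with `G`-action `α`, and `X` a `G`-set.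
The linear map determined by `ε_{s,t} ⊗ ε_{x,y} ⊗ a ↦ ε_{s⁻¹x,t⁻¹y} ⊗ ε_{s,t} ⊗ a`
is a `G`-equivariant ring isomorphism `M_G(M_X(A)) ≅ M_{|X|}(M_G(A))`, natural in `X`
and `A`; here `G` acts on `M_G(M_X A)` by `(g·f)(s,t) = g·f(g⁻¹s, g⁻¹t)` (acting on
`M_X A` through `X` and `A`) and on `M_{|X|}(M_G A)` through `M_G A` only (trivially on
the index set `|X|`).  The matrix rings are presented by additive isomorphisms `jP`,
`jQ` from the groups of finitely supported matrices subject to the matrix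
multiplication rules, and the actions by homomorphisms `αP`, `αQ` into the ring
automorphisms subject to the rules just stated. -/
theorem stmt_12 {G A X : Type} [Group G] [DecidableEq G] [Ring A] [MulAction G X] [DecidableEq X]
    (α : G →* RingAut A)
    {P Q : Type} [NonUnitalRing P] [NonUnitalRing Q]
    (jP : ((G × G) →₀ ((X × X) →₀ A)) ≃+ P)
    (hjP : ∀ (p q : G × G) (x y : X × X) (a b : A),
      jP (Finsupp.single p (Finsupp.single x a)) *
          jP (Finsupp.single q (Finsupp.single y b)) =
        if p.2 = q.1 ∧ x.2 = y.1
        then jP (Finsupp.single (p.1, q.2) (Finsupp.single (x.1, y.2) (a * b))) else 0)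
    (jQ : ((X × X) →₀ ((G × G) →₀ A)) ≃+ Q)
    (hjQ : ∀ (x y : X × X) (p q : G × G) (a b : A),
      jQ (Finsupp.single x (Finsupp.single p a)) *
          jQ (Finsupp.single y (Finsupp.single q b)) =
        if x.2 = y.1 ∧ p.2 = q.1
        then jQ (Finsupp.single (x.1, y.2) (Finsupp.single (p.1, q.2) (a * b))) else 0)
    (αP : G →* RingAut P)
    (hαP : ∀ (g : G) (p : G × G) (x : X × X) (a : A),
      αP g (jP (Finsupp.single p (Finsupp.single x a))) =
        jP (Finsupp.single (g * p.1, g * p.2)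
          (Finsupp.single (g • x.1, g • x.2) (α g a))))
    (αQ : G →* RingAut Q)
    (hαQ : ∀ (g : G) (x : X × X) (p : G × G) (a : A),
      αQ g (jQ (Finsupp.single x (Finsupp.single p a))) =
        jQ (Finsupp.single x (Finsupp.single (g * p.1, g * p.2) (α g a)))) :
    ∃ e : P ≃+* Q,
      -- the defining formula
      (∀ (st : G × G) (xy : X × X) (a : A),
        e (jP (Finsupp.single st (Finsupp.single xy a))) =
          jQ (Finsupp.single (st.1⁻¹ • xy.1, st.2⁻¹ • xy.2) (Finsupp.single st a))) ∧
      -- `G`-equivariance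
      (∀ (g : G) (p : P), e (αP g p) = αQ g (e p)) ∧
      -- naturality in `X` and `A`
      (∀ (X' A' : Type) [MulAction G X'] [Ring A']
        (f : X → X') (_ : ∀ (g : G) (x : X), f (g • x) = g • f x)
        (α' : G →* RingAut A') (φ : A →+* A') (_ : ∀ (g : G) (a : A), φ (α g a) = α' g (φ a))
        (P' Q' : Type) [NonUnitalRing P'] [NonUnitalRing Q']
        (jP' : ((G × G) →₀ ((X' × X') →₀ A')) ≃+ P')
        (jQ' : ((X' × X') →₀ ((G × G) →₀ A')) ≃+ Q')
        (e' : P' ≃+* Q')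
        (_ : ∀ (st : G × G) (xy : X' × X') (a : A'),
          e' (jP' (Finsupp.single st (Finsupp.single xy a))) =
            jQ' (Finsupp.single (st.1⁻¹ • xy.1, st.2⁻¹ • xy.2) (Finsupp.single st a)))
        (F : P →+ P')
        (_ : ∀ (st : G × G) (xy : X × X) (a : A),
          F (jP (Finsupp.single st (Finsupp.single xy a))) =
            jP' (Finsupp.single st (Finsupp.single (f xy.1, f xy.2) (φ a))))
        (Gm : Q →+ Q')
        (_ : ∀ (xy : X × X) (st : G × G) (a : A),
          Gm (jQ (Finsupp.single xy (Finsupp.single st a))) =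
            jQ' (Finsupp.single (f xy.1, f xy.2) (Finsupp.single st (φ a)))),
        ∀ p : P, e' (F p) = Gm (e p)) := by
  set e : P ≃+ Q := (jP.symm.trans (twistAddEquiv A)).trans jQ
  have he : ∀ (st : G × G) (xy : X × X) (a : A),
      e (jP (Finsupp.single st (Finsupp.single xy a))) =
        jQ (Finsupp.single (st.1⁻¹ • xy.1, st.2⁻¹ • xy.2) (Finsupp.single st a)) := by
    simp [e, twistAddEquiv_single_single]
  have hmul : ∀ p q : P, e (p * q) = e p * e q :=
    e.toAddMonoidHom.map_mul_of_map_mul_single_single jP fun st xy a st' xy' b => by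
      simp only [AddEquiv.coe_toAddMonoidHom, hjP, apply_ite e, map_zero, he, hjQ,
        inv_smul_eq_inv_smul_and_eq_iff]
  refine ⟨{ e with map_mul' := hmul }, he, fun g => ?_, ?_⟩
  · have h : e.toAddMonoidHom.comp (αP g).toAddEquiv.toAddMonoidHom =
        (αQ g).toAddEquiv.toAddMonoidHom.comp e.toAddMonoidHom :=
      jP.addMonoidHom_ext_single_single fun st xy a => by
        simp [hαP, he, hαQ, mul_smul]
    exact DFunLike.congr_fun h
  · intro X' A' _ _ f hf α' φ _ P' Q' _ _ jP' jQ' e' he' F hF Gm hGm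
    have h : e'.toAddEquiv.toAddMonoidHom.comp F = Gm.comp e.toAddMonoidHom :=
      jP.addMonoidHom_ext_single_single fun st xy a => by
        simp [hF, he', he, hGm, hf]
    exact DFunLike.congr_fun h
end

section
/- Let G be a group, B a G-graded ring, and (X, |·|) a G-graded set (a set with a weight function X → G). Then the linear map M_G(M_X(B)) → M_{|X|}(M_G(B)) determined by ε_{s,t} ⊗ ε_{x,y} ⊗ b ↦ ε_{x,y} ⊗ ε_{s|x|, t|y|} ⊗ b is an isomorphism of G-graded rings, natural in X and B, where the matrix gradings are as follows: ε_{s,t}⊗b has degree s|b|t⁻¹ in M_G(B) for homogeneous b; ε_{x,y}⊗b has degree |x||b||y|⁻¹ in M_X(B); and the index set |X| in the target is trivially graded. -/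
/-!
For fixed `x, y ∈ X` the shift `(s, t) ↦ (s ω(x), t ω(y))` is a bijection of `G × G`, so the map
is a reindexing of finitely supported coefficients and hence an additive bijection. On matrix
units it is multiplicative because, once `x₂ = y₁`, the index condition `t ω(x₂) = s' ω(y₁)`
of the target is equivalent to `t = s'` by cancelling `ω(y₁)`. It preserves degrees since
`s (ω(x) d ω(y)⁻¹) t⁻¹ = (s ω(x)) d (t ω(y))⁻¹`, and naturality is checked on matrix units.
-/

open Finsupp

namespace Finsupp

variable {ι ι' κ M : Type*} [AddCommMonoid M]

noncomputable def curryReindex (σ : κ → ι ≃ ι') : (ι →₀ κ →₀ M) ≃+ (κ →₀ ι' →₀ M) :=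
  curryAddEquiv.symm.trans
    ((Finsupp.domCongr ((Equiv.prodComm ι κ).trans (Equiv.prodCongrRight σ))).trans curryAddEquiv)

@[simp]
theorem curryReindex_single_single (σ : κ → ι ≃ ι') (i : ι) (k : κ) (m : M) :
    curryReindex σ (single i (single k m)) = single k (single (σ k i) m) := by
  simp [curryReindex]

end Finsupp

namespace AddEquiv

section NestedFinsupp

variable {ι κ M P : Type*} [AddCommMonoid M]

theorem addMonoidHom_ext_single_single_s13 [AddCommMonoid P] {N : Type*} [AddZeroClass N]
    (j : (ι →₀ κ →₀ M) ≃+ P) {f g : P →+ N}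
    (h : ∀ i k m, f (j (single i (single k m))) = g (j (single i (single k m)))) : f = g := by
  have hj : f.comp j.toAddMonoidHom = g.comp j.toAddMonoidHom :=
    Finsupp.addHom_ext' fun i => Finsupp.addHom_ext fun k m => h i k m
  ext z
  simpa using DFunLike.congr_fun hj (j.symm z)

theorem map_mul_of_map_mul_single_single {Q : Type*} [NonUnitalNonAssocSemiring P]
    [NonUnitalNonAssocSemiring Q] (j : (ι →₀ κ →₀ M) ≃+ P) (f : P →+ Q)
    (h : ∀ i k m i' k' m', f (j (single i (single k m)) * j (single i' (single k' m'))) =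
      f (j (single i (single k m))) * f (j (single i' (single k' m')))) (x y : P) :
    f (x * y) = f x * f y := by
  have map_mul_left : ∀ i k m, f.comp (AddMonoidHom.mulLeft (j (single i (single k m)))) =
      (AddMonoidHom.mulLeft (f (j (single i (single k m))))).comp f := fun i k m =>
    j.addMonoidHom_ext_single_single_s13 fun i' k' m' => h i k m i' k' m'
  have map_mul_right : f.comp (AddMonoidHom.mulRight y) = (AddMonoidHom.mulRight (f y)).comp f :=
    j.addMonoidHom_ext_single_single_s13 fun i k m => DFunLike.congr_fun (map_mul_left i k m) y
  exact DFunLike.congr_fun map_mul_right x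

end NestedFinsupp

theorem apply_mem_closure_image_iff {P Q : Type*} [AddGroup P] [AddGroup Q] (e : P ≃+ Q)
    (s : Set P) (z : P) : e z ∈ AddSubgroup.closure (e '' s) ↔ z ∈ AddSubgroup.closure s := by
  rw [← e.coe_toAddMonoidHom, ← AddMonoidHom.map_closure, AddSubgroup.mem_map_equiv]
  simp

end AddEquiv

section WeightShift

variable {G X B : Type*} [Group G] (ω : X → G)

noncomputable def weightShift [AddCommMonoid B] :
    ((G × G) →₀ (X × X) →₀ B) ≃+ ((X × X) →₀ (G × G) →₀ B) :=
  curryReindex fun xy => (Equiv.mulRight (ω xy.1)).prodCongr (Equiv.mulRight (ω xy.2))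

variable {P Q : Type*} [NonUnitalNonAssocRing B] [NonUnitalNonAssocRing P]
  [NonUnitalNonAssocRing Q]
  (jP : ((G × G) →₀ ((X × X) →₀ B)) ≃+ P) (jQ : ((X × X) →₀ ((G × G) →₀ B)) ≃+ Q)

noncomputable def matrixWeightShift : P ≃+ Q :=
  jP.symm.trans ((weightShift ω).trans jQ)

theorem matrixWeightShift_single_single (st : G × G) (xy : X × X) (b : B) :
    matrixWeightShift ω jP jQ (jP (single st (single xy b))) =
      jQ (single xy (single (st.1 * ω xy.1, st.2 * ω xy.2) b)) := by
  simp only [matrixWeightShift, weightShift, AddEquiv.trans_apply, AddEquiv.symm_apply_apply,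
    curryReindex_single_single]
  rfl

theorem matrixWeightShift_image_homogeneous (𝒷 : G → AddSubgroup B) (g : G) :
    matrixWeightShift ω jP jQ '' {y : P | ∃ (st : G × G) (xy : X × X) (d : G) (b : B),
        b ∈ 𝒷 d ∧ st.1 * (ω xy.1 * d * (ω xy.2)⁻¹) * st.2⁻¹ = g ∧
        y = jP (single st (single xy b))} =
      {y : Q | ∃ (xy : X × X) (st : G × G) (d : G) (b : B),
        b ∈ 𝒷 d ∧ st.1 * d * st.2⁻¹ = g ∧ y = jQ (single xy (single st b))} := by
  ext w
  constructor
  · rintro ⟨-, ⟨st, xy, d, b, hb, rfl, rfl⟩, rfl⟩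
    exact ⟨xy, _, d, b, hb, by group, matrixWeightShift_single_single ω jP jQ st xy b⟩
  · rintro ⟨xy, st, d, b, hb, rfl, rfl⟩
    refine ⟨_, ⟨(st.1 * (ω xy.1)⁻¹, st.2 * (ω xy.2)⁻¹), xy, d, b, hb, by group, rfl⟩, ?_⟩
    simp only [matrixWeightShift_single_single, inv_mul_cancel_right]

theorem matrixWeightShift_naturality {X' B' P' Q' : Type*} [AddCommMonoid B'] [AddCommMonoid P']
    [AddCommMonoid Q'] (ω' : X' → G) (f : X → X') (hf : ∀ x, ω' (f x) = ω x) (φ : B → B')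
    (jP' : ((G × G) →₀ ((X' × X') →₀ B')) ≃+ P') (jQ' : ((X' × X') →₀ ((G × G) →₀ B')) ≃+ Q')
    (e' : P' →+ Q')
    (he' : ∀ (st : G × G) (xy : X' × X') (b : B'), e' (jP' (single st (single xy b))) =
      jQ' (single xy (single (st.1 * ω' xy.1, st.2 * ω' xy.2) b)))
    (F : P →+ P') (hF : ∀ (st : G × G) (xy : X × X) (b : B),
      F (jP (single st (single xy b))) = jP' (single st (single (f xy.1, f xy.2) (φ b))))
    (Gm : Q →+ Q') (hGm : ∀ (xy : X × X) (st : G × G) (b : B),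
      Gm (jQ (single xy (single st b))) = jQ' (single (f xy.1, f xy.2) (single st (φ b))))
    (z : P) : e' (F z) = Gm (matrixWeightShift ω jP jQ z) := by
  refine DFunLike.congr_fun (jP.addMonoidHom_ext_single_single_s13
    (f := e'.comp F) (g := Gm.comp (matrixWeightShift ω jP jQ).toAddMonoidHom) fun st xy b => ?_) z
  simp only [AddMonoidHom.comp_apply, AddEquiv.coe_toAddMonoidHom, hF, he',
    matrixWeightShift_single_single, hGm, hf]

variable [DecidableEq G] [DecidableEq X]
  (hjP : ∀ (p q : G × G) (x y : X × X) (a b : B),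
    jP (single p (single x a)) * jP (single q (single y b)) =
      if p.2 = q.1 ∧ x.2 = y.1 then jP (single (p.1, q.2) (single (x.1, y.2) (a * b))) else 0)
  (hjQ : ∀ (x y : X × X) (p q : G × G) (a b : B),
    jQ (single x (single p a)) * jQ (single y (single q b)) =
      if x.2 = y.1 ∧ p.2 = q.1 then jQ (single (x.1, y.2) (single (p.1, q.2) (a * b))) else 0)
include hjP hjQ

theorem matrixWeightShift_map_mul (z w : P) :
    matrixWeightShift ω jP jQ (z * w) =
      matrixWeightShift ω jP jQ z * matrixWeightShift ω jP jQ w := by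
  refine jP.map_mul_of_map_mul_single_single (matrixWeightShift ω jP jQ).toAddMonoidHom
    (fun p x a q y b => ?_) z w
  simp only [AddEquiv.coe_toAddMonoidHom]
  rw [hjP, matrixWeightShift_single_single, matrixWeightShift_single_single, hjQ]
  by_cases h : p.2 = q.1 ∧ x.2 = y.1
  · rw [if_pos h, if_pos ⟨h.2, by rw [h.1, h.2]⟩, matrixWeightShift_single_single]
  · have h' : ¬(x.2 = y.1 ∧ p.2 * ω x.2 = q.1 * ω y.1) := fun ⟨hx, hp⟩ =>
      h ⟨mul_right_cancel (by rwa [hx] at hp), hx⟩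
    rw [if_neg h, if_neg h', map_zero]

noncomputable def matrixWeightShiftRingEquiv : P ≃+* Q :=
  { matrixWeightShift ω jP jQ with map_mul' := matrixWeightShift_map_mul ω jP jQ hjP hjQ }

end WeightShift

theorem stmt_13_general {G B X : Type} [Group G] [DecidableEq G] [DecidableEq X] [Ring B]
    (𝒷 : G → AddSubgroup B)
    (ω : X → G)
    {P Q : Type} [NonUnitalRing P] [NonUnitalRing Q]
    (jP : ((G × G) →₀ ((X × X) →₀ B)) ≃+ P)
    (hjP : ∀ (p q : G × G) (x y : X × X) (a b : B),
      jP (Finsupp.single p (Finsupp.single x a)) *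
          jP (Finsupp.single q (Finsupp.single y b)) =
        if p.2 = q.1 ∧ x.2 = y.1
        then jP (Finsupp.single (p.1, q.2) (Finsupp.single (x.1, y.2) (a * b))) else 0)
    (jQ : ((X × X) →₀ ((G × G) →₀ B)) ≃+ Q)
    (hjQ : ∀ (x y : X × X) (p q : G × G) (a b : B),
      jQ (Finsupp.single x (Finsupp.single p a)) *
          jQ (Finsupp.single y (Finsupp.single q b)) =
        if x.2 = y.1 ∧ p.2 = q.1
        then jQ (Finsupp.single (x.1, y.2) (Finsupp.single (p.1, q.2) (a * b))) else 0) :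
    ∃ e : P ≃+* Q,
      -- the defining formula
      (∀ (st : G × G) (xy : X × X) (b : B),
        e (jP (Finsupp.single st (Finsupp.single xy b))) =
          jQ (Finsupp.single xy (Finsupp.single (st.1 * ω xy.1, st.2 * ω xy.2) b))) ∧
      -- `e` is an isomorphism of `G`-graded rings
      (∀ (g : G) (z : P),
        z ∈ AddSubgroup.closure {y : P | ∃ (st : G × G) (xy : X × X) (d : G) (b : B),
            b ∈ 𝒷 d ∧ st.1 * (ω xy.1 * d * (ω xy.2)⁻¹) * st.2⁻¹ = g ∧
            y = jP (Finsupp.single st (Finsupp.single xy b))} ↔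
        e z ∈ AddSubgroup.closure {y : Q | ∃ (xy : X × X) (st : G × G) (d : G) (b : B),
            b ∈ 𝒷 d ∧ st.1 * d * st.2⁻¹ = g ∧
            y = jQ (Finsupp.single xy (Finsupp.single st b))}) ∧
      -- naturality in `X` and `B`
      (∀ (X' B' : Type) [Ring B']
        (𝒷' : G → AddSubgroup B') (ω' : X' → G)
        (f : X → X') (_ : ∀ x : X, ω' (f x) = ω x)
        (φ : B →+* B') (_ : ∀ (d : G) (b : B), b ∈ 𝒷 d → φ b ∈ 𝒷' d)
        (P' Q' : Type) [NonUnitalRing P'] [NonUnitalRing Q']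
        (jP' : ((G × G) →₀ ((X' × X') →₀ B')) ≃+ P')
        (jQ' : ((X' × X') →₀ ((G × G) →₀ B')) ≃+ Q')
        (e' : P' ≃+* Q')
        (_ : ∀ (st : G × G) (xy : X' × X') (b : B'),
          e' (jP' (Finsupp.single st (Finsupp.single xy b))) =
            jQ' (Finsupp.single xy (Finsupp.single (st.1 * ω' xy.1, st.2 * ω' xy.2) b)))
        (F : P →+ P')
        (_ : ∀ (st : G × G) (xy : X × X) (b : B),
          F (jP (Finsupp.single st (Finsupp.single xy b))) =
            jP' (Finsupp.single st (Finsupp.single (f xy.1, f xy.2) (φ b))))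
        (Gm : Q →+ Q')
        (_ : ∀ (xy : X × X) (st : G × G) (b : B),
          Gm (jQ (Finsupp.single xy (Finsupp.single st b))) =
            jQ' (Finsupp.single (f xy.1, f xy.2) (Finsupp.single st (φ b)))),
        ∀ z : P, e' (F z) = Gm (e z)) := by
  refine ⟨matrixWeightShiftRingEquiv ω jP jQ hjP hjQ, matrixWeightShift_single_single ω jP jQ,
    fun g z => ?_, ?_⟩
  · rw [← matrixWeightShift_image_homogeneous ω jP jQ 𝒷 g]
    exact ((matrixWeightShift ω jP jQ).apply_mem_closure_image_iff _ z).symm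
  · intro X' B' _ 𝒷' ω' f hf φ _ P' Q' _ _ jP' jQ' e' he' F hF Gm hGm z
    exact matrixWeightShift_naturality ω jP jQ ω' f hf φ jP' jQ' (e' : P' →+ Q') he' F hF Gm hGm z

/-- Let `G` be a group, `B` a `G`-graded ring and `(X, ω)` a `G`-graded
set (a set with a weight `ω : X → G`).  The linear map determined by
`ε_{s,t} ⊗ ε_{x,y} ⊗ b ↦ ε_{x,y} ⊗ ε_{s·ω(x), t·ω(y)} ⊗ b` is an isomorphism of
`G`-graded rings `M_G(M_X(B)) ≅ M_{|X|}(M_G(B))`, natural in `X` and `B`.  The matrix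
gradings are: `ε_{s,t} ⊗ b` has degree `s·|b|·t⁻¹` in `M_G(B)` for homogeneous `b`;
`ε_{x,y} ⊗ b` has degree `ω(x)·|b|·ω(y)⁻¹` in `M_X(B)`; and the index set `|X|` in the
target is trivially graded.  The matrix rings are presented by additive isomorphisms
`jP`, `jQ` subject to the matrix multiplication rules. -/
theorem stmt_13 {G B X : Type} [Group G] [DecidableEq G] [DecidableEq X] [Ring B]
    (𝒷 : G → AddSubgroup B) [DirectSum.Decomposition 𝒷]
    (hBmul : ∀ (g h : G) (a b : B), a ∈ 𝒷 g → b ∈ 𝒷 h → a * b ∈ 𝒷 (g * h))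
    (ω : X → G)
    {P Q : Type} [NonUnitalRing P] [NonUnitalRing Q]
    (jP : ((G × G) →₀ ((X × X) →₀ B)) ≃+ P)
    (hjP : ∀ (p q : G × G) (x y : X × X) (a b : B),
      jP (Finsupp.single p (Finsupp.single x a)) *
          jP (Finsupp.single q (Finsupp.single y b)) =
        if p.2 = q.1 ∧ x.2 = y.1
        then jP (Finsupp.single (p.1, q.2) (Finsupp.single (x.1, y.2) (a * b))) else 0)
    (jQ : ((X × X) →₀ ((G × G) →₀ B)) ≃+ Q)
    (hjQ : ∀ (x y : X × X) (p q : G × G) (a b : B),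
      jQ (Finsupp.single x (Finsupp.single p a)) *
          jQ (Finsupp.single y (Finsupp.single q b)) =
        if x.2 = y.1 ∧ p.2 = q.1
        then jQ (Finsupp.single (x.1, y.2) (Finsupp.single (p.1, q.2) (a * b))) else 0) :
    ∃ e : P ≃+* Q,
      -- the defining formula
      (∀ (st : G × G) (xy : X × X) (b : B),
        e (jP (Finsupp.single st (Finsupp.single xy b))) =
          jQ (Finsupp.single xy (Finsupp.single (st.1 * ω xy.1, st.2 * ω xy.2) b))) ∧
      -- `e` is an isomorphism of `G`-graded rings
      (∀ (g : G) (z : P),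
        z ∈ AddSubgroup.closure {y : P | ∃ (st : G × G) (xy : X × X) (d : G) (b : B),
            b ∈ 𝒷 d ∧ st.1 * (ω xy.1 * d * (ω xy.2)⁻¹) * st.2⁻¹ = g ∧
            y = jP (Finsupp.single st (Finsupp.single xy b))} ↔
        e z ∈ AddSubgroup.closure {y : Q | ∃ (xy : X × X) (st : G × G) (d : G) (b : B),
            b ∈ 𝒷 d ∧ st.1 * d * st.2⁻¹ = g ∧
            y = jQ (Finsupp.single xy (Finsupp.single st b))}) ∧
      -- naturality in `X` and `B`
      (∀ (X' B' : Type) [Ring B']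
        (𝒷' : G → AddSubgroup B') (ω' : X' → G)
        (f : X → X') (_ : ∀ x : X, ω' (f x) = ω x)
        (φ : B →+* B') (_ : ∀ (d : G) (b : B), b ∈ 𝒷 d → φ b ∈ 𝒷' d)
        (P' Q' : Type) [NonUnitalRing P'] [NonUnitalRing Q']
        (jP' : ((G × G) →₀ ((X' × X') →₀ B')) ≃+ P')
        (jQ' : ((X' × X') →₀ ((G × G) →₀ B')) ≃+ Q')
        (e' : P' ≃+* Q')
        (_ : ∀ (st : G × G) (xy : X' × X') (b : B'),
          e' (jP' (Finsupp.single st (Finsupp.single xy b))) =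
            jQ' (Finsupp.single xy (Finsupp.single (st.1 * ω' xy.1, st.2 * ω' xy.2) b)))
        (F : P →+ P')
        (_ : ∀ (st : G × G) (xy : X × X) (b : B),
          F (jP (Finsupp.single st (Finsupp.single xy b))) =
            jP' (Finsupp.single st (Finsupp.single (f xy.1, f xy.2) (φ b))))
        (Gm : Q →+ Q')
        (_ : ∀ (xy : X × X) (st : G × G) (b : B),
          Gm (jQ (Finsupp.single xy (Finsupp.single st b))) =
            jQ' (Finsupp.single (f xy.1, f xy.2) (Finsupp.single st (φ b)))),
        ∀ z : P, e' (F z) = Gm (e z)) :=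
  stmt_13_general 𝒷 ω jP hjP jQ hjQ
end

section
/- Let R be a unital G-graded ring with involution * satisfying R_g* ⊆ R_{g⁻¹}, and suppose R is strongly graded. For a graded right R-module M, let M* = {f ∈ Hom_ℤ(M,R) : f(xa) = a*f(x)} be the hermitian dual with grading (M*)_d = {f : f(M_g) ⊆ R_{g⁻¹d}}, and for an R₁-module N, let N* be the hermitian dual over R₁. Then the natural transformation φ_M : (M*)₁ → (M₁)*, given by restriction f ↦ f|_{M₁} (which lands in R₁), is an isomorphism for every finitely generated projective graded module M, and (−)₁ together with φ is a nonsingular form functor. -/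
/-!
Strong grading writes `1 = ∑ aᵢ bᵢ` with `aᵢ ∈ R_{g⁻¹}`, `bᵢ ∈ R_g` (a `UnitDecomposition`).
For `x ∈ M_g` the elements `x aᵢ` lie in `M₁`, and every hermitian `f` satisfies
`f x = ∑ bᵢ* f(x aᵢ)`; hence `f` is determined by its restriction to `M₁`.
Conversely, given `u` on `M₁`, the same formula `x ↦ ∑ bᵢ* u(x aᵢ)` on each `M_g` glues to a
map on `M`. Everything then follows from `u(x c) = c* ∑ bᵢ* u(x aᵢ)` for `x ∈ M_g`,
`c ∈ R_{g⁻¹}`, obtained by writing `x c = ∑ (x aᵢ)(bᵢ c)` with `bᵢ c ∈ R₁`.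
-/

open MulOpposite DirectSum

lemma AddSubgroup.exists_sum_mul_eq_of_mem_closure {R : Type*} [Ring R] {P Q : AddSubgroup R}
    {x : R} (hx : x ∈ AddSubgroup.closure {z | ∃ a ∈ P, ∃ b ∈ Q, z = a * b}) :
    ∃ (n : ℕ) (a b : Fin n → R), (∀ i, a i ∈ P) ∧ (∀ i, b i ∈ Q) ∧ ∑ i, a i * b i = x := by
  rw [← SetLike.mem_coe, ← AddSubgroup.coe_toIntSubmodule, SetLike.mem_coe,
    AddSubgroup.toIntSubmodule_closure, Submodule.mem_span_set'] at hx
  obtain ⟨n, k, z, rfl⟩ := hx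
  choose a ha b hb hab using fun i => (z i).2
  refine ⟨n, fun i => k i • a i, b, fun i => zsmul_mem (ha i) (k i), hb, ?_⟩
  simp only [smul_mul_assoc, hab]

lemma DirectSum.IsInternal.addMonoidHom_ext {ι M N : Type*} [DecidableEq ι] [AddCommGroup M]
    [AddCommMonoid N] {ℳ : ι → AddSubgroup M} (h : IsInternal ℳ) {f f' : M →+ N}
    (hff' : ∀ i, ∀ x ∈ ℳ i, f x = f' x) : f = f' :=
  (AddMonoidHom.cancel_right h.surjective).1 <| DirectSum.addHom_ext fun i x => by
    simpa using hff' i x x.2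

variable {G R M : Type*} [Group G] [Ring R] [AddCommGroup M] [Module Rᵐᵒᵖ M]

structure UnitDecomposition (𝒜 : G → AddSubgroup R) (g : G) where
  n : ℕ
  a : Fin n → R
  b : Fin n → R
  a_mem : ∀ i, a i ∈ 𝒜 g⁻¹
  b_mem : ∀ i, b i ∈ 𝒜 g
  sum_mul : ∑ i, a i * b i = 1

variable {𝒜 : G → AddSubgroup R} {ℳ : G → AddSubgroup M}

namespace UnitDecomposition

variable {g : G}

lemma nonempty (hone : (1 : R) ∈ 𝒜 1)
    (hstrong : ∀ g h : G, ∀ x ∈ 𝒜 (g * h),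
      x ∈ AddSubgroup.closure {z : R | ∃ a ∈ 𝒜 g, ∃ b ∈ 𝒜 h, z = a * b}) (g : G) :
    Nonempty (UnitDecomposition 𝒜 g) := by
  obtain ⟨n, a, b, ha, hb, hab⟩ := AddSubgroup.exists_sum_mul_eq_of_mem_closure <|
    hstrong g⁻¹ g 1 (by rwa [inv_mul_cancel])
  exact ⟨⟨n, a, b, ha, hb, hab⟩⟩

lemma sum_smul_smul (e : UnitDecomposition 𝒜 g) (x : M) :
    ∑ i, op (e.b i) • op (e.a i) • x = x := by
  simp only [smul_smul, ← op_mul, ← Finset.sum_smul, ← Finset.op_sum, e.sum_mul, op_one, one_smul]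

lemma smul_mem_one
    (hcompat : ∀ (g h : G) (m : M) (r : R), m ∈ ℳ g → r ∈ 𝒜 h → op r • m ∈ ℳ (g * h))
    (e : UnitDecomposition 𝒜 g) {x : M} (hx : x ∈ ℳ g) (i : Fin e.n) :
    op (e.a i) • x ∈ ℳ 1 := by
  simpa using hcompat g g⁻¹ x (e.a i) hx (e.a_mem i)

section Star

variable [StarRing R]

def lift (e : UnitDecomposition 𝒜 g) (v : M →+ R) : M →+ R :=
  ∑ i, (AddMonoidHom.mulLeft (star (e.b i))).comp
    (v.comp (DistribSMul.toAddMonoidHom M (op (e.a i))))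

lemma lift_apply (e : UnitDecomposition 𝒜 g) (v : M →+ R) (x : M) :
    e.lift v x = ∑ i, star (e.b i) * v (op (e.a i) • x) := by
  simp [lift, AddMonoidHom.finsetSum_apply]

lemma lift_eq_self (e : UnitDecomposition 𝒜 g) {f : M →+ R}
    (hf : ∀ (x : M) (a : R), f (op a • x) = star a * f x) : e.lift f = f := by
  ext x
  conv_rhs => rw [← e.sum_smul_smul x]
  simp only [lift_apply, map_sum, hf]

lemma lift_congr
    (hcompat : ∀ (g h : G) (m : M) (r : R), m ∈ ℳ g → r ∈ 𝒜 h → op r • m ∈ ℳ (g * h))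
    (e : UnitDecomposition 𝒜 g) {v v' : M →+ R} (h : ∀ y ∈ ℳ 1, v y = v' y) {x : M}
    (hx : x ∈ ℳ g) : e.lift v x = e.lift v' x := by
  simp only [lift_apply]
  exact Finset.sum_congr rfl fun i _ => by rw [h _ (e.smul_mem_one hcompat hx i)]

lemma apply_smul_eq_star_mul_lift
    (hmul : ∀ (g h : G) (a b : R), a ∈ 𝒜 g → b ∈ 𝒜 h → a * b ∈ 𝒜 (g * h))
    (hcompat : ∀ (g h : G) (m : M) (r : R), m ∈ ℳ g → r ∈ 𝒜 h → op r • m ∈ ℳ (g * h))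
    (e : UnitDecomposition 𝒜 g) {v : M →+ R}
    (hv : ∀ y ∈ ℳ 1, ∀ c ∈ 𝒜 1, v (op c • y) = star c * v y)
    {x : M} (hx : x ∈ ℳ g) {c : R} (hc : c ∈ 𝒜 g⁻¹) :
    v (op c • x) = star c * e.lift v x := by
  have hbc : ∀ i, e.b i * c ∈ 𝒜 1 := fun i => by
    simpa using hmul _ _ _ _ (e.b_mem i) hc
  calc v (op c • x) = ∑ i, v (op (e.b i * c) • op (e.a i) • x) := by
        conv_lhs => rw [← e.sum_smul_smul x]
        simp only [Finset.smul_sum, smul_smul, op_mul, mul_assoc, map_sum]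
    _ = ∑ i, star c * (star (e.b i) * v (op (e.a i) • x)) :=
        Finset.sum_congr rfl fun i _ => by
          rw [hv _ (e.smul_mem_one hcompat hx i) _ (hbc i), star_mul, mul_assoc]
    _ = star c * e.lift v x := by rw [lift_apply, Finset.mul_sum]

end Star

end UnitDecomposition

def DirectSum.extendByZero {ι N : Type*} [DecidableEq ι] [AddCommMonoid N]
    (ℳ : ι → AddSubgroup M) [Decomposition ℳ] (i : ι) (u : ℳ i →+ N) : M →+ N where
  toFun x := u (decompose ℳ x i)
  map_zero' := by simp
  map_add' x y := by simp [decompose_add]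

lemma DirectSum.extendByZero_apply {ι N : Type*} [DecidableEq ι] [AddCommMonoid N]
    (ℳ : ι → AddSubgroup M) [Decomposition ℳ] {i : ι} (u : ℳ i →+ N) (x : M) :
    extendByZero ℳ i u x = u (decompose ℳ x i) :=
  rfl

lemma DirectSum.extendByZero_of_mem {ι N : Type*} [DecidableEq ι] [AddCommMonoid N]
    (ℳ : ι → AddSubgroup M) [Decomposition ℳ] {i : ι} (u : ℳ i →+ N) {x : M} (hx : x ∈ ℳ i) :
    extendByZero ℳ i u x = u ⟨x, hx⟩ := by
  rw [extendByZero_apply, decompose_of_mem ℳ hx, of_eq_same]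

variable [StarRing R]

lemma eq_of_forall_mem_one_eq [DecidableEq G] (hinternal : DirectSum.IsInternal ℳ)
    (hcompat : ∀ (g h : G) (m : M) (r : R), m ∈ ℳ g → r ∈ 𝒜 h → op r • m ∈ ℳ (g * h))
    (E : ∀ g, UnitDecomposition 𝒜 g) {f f' : M →+ R}
    (hf : ∀ (x : M) (a : R), f (op a • x) = star a * f x)
    (hf' : ∀ (x : M) (a : R), f' (op a • x) = star a * f' x)
    (h : ∀ x ∈ ℳ 1, f x = f' x) : f = f' :=
  hinternal.addMonoidHom_ext fun g x hx => by
    rw [← (E g).lift_eq_self hf, ← (E g).lift_eq_self hf', (E g).lift_congr hcompat h hx]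

section GradedLift

variable [DecidableEq G] [Decomposition ℳ]

def gradedLift (ℳ : G → AddSubgroup M) [Decomposition ℳ] (E : ∀ g, UnitDecomposition 𝒜 g)
    (v : M →+ R) : M →+ R :=
  (toAddMonoid fun g => ((E g).lift v).comp (ℳ g).subtype).comp
    (decomposeAddEquiv ℳ).toAddMonoidHom

variable (E : ∀ g, UnitDecomposition 𝒜 g) {v : M →+ R}

lemma gradedLift_of_mem {g : G} {x : M} (hx : x ∈ ℳ g) :
    gradedLift ℳ E v x = (E g).lift v x := by
  simp [gradedLift, decompose_of_mem ℳ hx]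

lemma gradedLift_mem
    (hmul : ∀ (g h : G) (a b : R), a ∈ 𝒜 g → b ∈ 𝒜 h → a * b ∈ 𝒜 (g * h))
    (hstar : ∀ (g : G), ∀ a ∈ 𝒜 g, star a ∈ 𝒜 g⁻¹) (hv_mem : ∀ y, v y ∈ 𝒜 1)
    {g : G} {x : M} (hx : x ∈ ℳ g) : gradedLift ℳ E v x ∈ 𝒜 g⁻¹ := by
  rw [gradedLift_of_mem E hx, (E g).lift_apply]
  exact sum_mem fun i _ => by simpa using hmul _ _ _ _ (hstar _ _ ((E g).b_mem i)) (hv_mem _)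

variable (hmul : ∀ (g h : G) (a b : R), a ∈ 𝒜 g → b ∈ 𝒜 h → a * b ∈ 𝒜 (g * h))
    (hcompat : ∀ (g h : G) (m : M) (r : R), m ∈ ℳ g → r ∈ 𝒜 h → op r • m ∈ ℳ (g * h))
    (hv : ∀ y ∈ ℳ 1, ∀ c ∈ 𝒜 1, v (op c • y) = star c * v y)
include hmul hcompat hv

lemma gradedLift_eq_of_mem_one (hone : (1 : R) ∈ 𝒜 1) {x : M} (hx : x ∈ ℳ 1) :
    gradedLift ℳ E v x = v x := by
  have h := (E 1).apply_smul_eq_star_mul_lift hmul hcompat hv hx (c := 1) (by rwa [inv_one])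
  rw [op_one, one_smul, star_one, one_mul] at h
  rw [gradedLift_of_mem E hx, h]

lemma gradedLift_smul_of_mem {g h : G} {x : M} (hx : x ∈ ℳ g) {c : R} (hc : c ∈ 𝒜 h) :
    gradedLift ℳ E v (op c • x) = star c * gradedLift ℳ E v x := by
  set e := E (g * h)
  have hca : ∀ i, c * e.a i ∈ 𝒜 g⁻¹ := fun i => by
    simpa [show h * (g * h)⁻¹ = g⁻¹ by group] using hmul _ _ _ _ hc (e.a_mem i)
  rw [gradedLift_of_mem E (hcompat _ _ _ _ hx hc), gradedLift_of_mem E hx, e.lift_apply]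
  calc ∑ i, star (e.b i) * v (op (e.a i) • op c • x)
      = ∑ i, star (e.b i) * (star (c * e.a i) * (E g).lift v x) :=
        Finset.sum_congr rfl fun i _ => by
          rw [smul_smul, ← op_mul, (E g).apply_smul_eq_star_mul_lift hmul hcompat hv hx (hca i)]
    _ = star (c * ∑ i, e.a i * e.b i) * (E g).lift v x := by
        simp only [Finset.mul_sum, star_sum, Finset.sum_mul, star_mul, mul_assoc]
    _ = star c * (E g).lift v x := by rw [e.sum_mul, mul_one]

lemma gradedLift_smul [Decomposition 𝒜] (x : M) (c : R) :
    gradedLift ℳ E v (op c • x) = star c * gradedLift ℳ E v x := by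
  induction x using Decomposition.inductionOn ℳ generalizing c with
  | zero => simp
  | homogeneous x =>
    induction c using Decomposition.inductionOn 𝒜 with
    | zero => simp
    | homogeneous c => exact gradedLift_smul_of_mem E hmul hcompat hv x.2 c.2
    | add c c' hc hc' => simp only [op_add, add_smul, map_add, hc, hc', star_add, add_mul]
  | add x x' hx hx' => simp only [smul_add, map_add, hx, hx', mul_add]

end GradedLift

/-- Let `R` be a unital `G`-graded `*`-ring (`R_g* ⊆ R_{g⁻¹}`) which is
strongly graded.  For a graded right `R`-module `M`, the hermitian dual is
`M* = {f : M →+ R : f(xa) = a*·f(x)}` with grading `(M*)_d = {f : f(M_g) ⊆ R_{g⁻¹d}}`;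
for an `R₁`-module the hermitian dual is taken over `R₁ = R_1` (maps into `R₁` that are
`R₁`-antilinear).  Then for every finitely generated projective graded module `M` the
restriction map `φ_M : (M*)₁ → (M₁)*`, `f ↦ f|_{M₁}`, is an isomorphism — i.e. `(-)₁`
together with `φ` is a nonsingular form functor.  (Bijectivity of the canonical
restriction map is asserted below; the target consists of the additive maps
`M₁ → R` landing in `R₁` that are `R₁`-antilinear.) -/
theorem stmt_16 {G R : Type} [Group G] [DecidableEq G] [Ring R] [StarRing R]
    (𝒜 : G → AddSubgroup R) [DirectSum.Decomposition 𝒜]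
    (hone : (1 : R) ∈ 𝒜 1)
    (hmul : ∀ (g h : G) (a b : R), a ∈ 𝒜 g → b ∈ 𝒜 h → a * b ∈ 𝒜 (g * h))
    (hstar : ∀ (g : G), ∀ a ∈ 𝒜 g, star a ∈ 𝒜 g⁻¹)
    -- `R` is strongly graded:
    (hstrong : ∀ g h : G, ∀ x ∈ 𝒜 (g * h),
      x ∈ AddSubgroup.closure {z : R | ∃ a ∈ 𝒜 g, ∃ b ∈ 𝒜 h, z = a * b})
    -- `M` a graded right `R`-module …
    {M : Type} [AddCommGroup M] [Module Rᵐᵒᵖ M]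
    (ℳ : G → AddSubgroup M)
    (hinternal : DirectSum.IsInternal ℳ)
    (hcompat : ∀ (g h : G) (m : M) (r : R), m ∈ ℳ g → r ∈ 𝒜 h →
      op r • m ∈ ℳ (g * h)) :
    Function.Bijective
      (fun f : {f : {f : M →+ R // ∀ (x : M) (a : R), f (op a • x) = star a * f x} //
          ∀ (g : G) (x : M), x ∈ ℳ g → f.1 x ∈ 𝒜 g⁻¹} =>
        (⟨(f.1.1).comp (ℳ 1).subtype,
          fun x => by simpa using f.2 1 x.1 x.2,
          fun x a ha hx => by simpa using f.1.2 (x : M) a⟩ :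
          {u : (ℳ 1) →+ R //
            (∀ x : ℳ 1, u x ∈ 𝒜 1) ∧
            ∀ (x : ℳ 1) (a : R), a ∈ 𝒜 1 →
              ∀ hx : op a • (x : M) ∈ ℳ 1,
                u ⟨op a • (x : M), hx⟩ = star a * u x})) := by
  let _ : Decomposition ℳ := hinternal.chooseDecomposition
  have E : ∀ g, UnitDecomposition 𝒜 g := fun g => (UnitDecomposition.nonempty hone hstrong g).some
  refine ⟨fun f f' hff' => ?_, fun u => ?_⟩
  · have h1 : ∀ x ∈ ℳ 1, f.1.1 x = f'.1.1 x := fun x hx =>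
      DFunLike.congr_fun (congrArg Subtype.val hff') ⟨x, hx⟩
    exact Subtype.ext <| Subtype.ext <| eq_of_forall_mem_one_eq hinternal hcompat E f.1.2 f'.1.2 h1
  · set v := extendByZero ℳ 1 u.1
    have hv : ∀ y ∈ ℳ 1, ∀ c ∈ 𝒜 1, v (op c • y) = star c * v y := fun y hy c hc => by
      have hcy : op c • y ∈ ℳ 1 := by simpa using hcompat 1 1 y c hy hc
      rw [extendByZero_of_mem ℳ _ hcy, extendByZero_of_mem ℳ _ hy]
      exact u.2.2 ⟨y, hy⟩ c hc hcy
    refine ⟨⟨⟨gradedLift ℳ E v, gradedLift_smul E hmul hcompat hv⟩,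
      fun g x hx => gradedLift_mem E hmul hstar (fun y => u.2.1 (decompose ℳ y 1)) hx⟩, ?_⟩
    refine Subtype.ext (AddMonoidHom.ext fun x => ?_)
    change gradedLift ℳ E v x = u.1 x
    rw [gradedLift_eq_of_mem_one E hmul hcompat hv hone x.2, extendByZero_of_mem ℳ _ x.2]
end
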